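/- arXiv:2002.08659 — 7 statements merged into one kernel-verified Lean document; each statement's English description precedes it below -/
import Mathlib

section
/- For any graph G with maximum degree Δ, there exists a proper edge coloring of G using at most Δ+1 colors (Vizing's Theorem). -/
/-!
Colour the edges one at a time. To colour a new edge `x y₀`, grow a maximal Vizing fan
`y₀, …, y_k` at `x`, in which the colour of `x y_{i+1}` is missing at `y_i`, and pick a colour
`α` missing at `x` and a colour `β` missing at `y_k`; both exist because `Δ + 1` colours exceed
every degree. If `β` is also missing at `x`, rotate the fan: give each `x y_i` the colour of
`x y_{i+1}` and give `β` to `x y_k`. Otherwise, by maximality, `β` sits on a fan edge `x y_m`.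
Swapping `α` and `β` along the `α`/`β` Kempe chain through `x` frees `β` at `x`, and then either
`y₀, …, y_{m-1}` or `y₀, …, y_k` is still a fan with `β` missing at its last vertex, unless the
chain contains `x`, `y_{m-1}` and `y_k`. That is impossible: the chain is a path, and all three
vertices have degree at most one in it.
-/

open Finset SimpleGraph

namespace SimpleGraph

variable {V : Type*} {G : SimpleGraph V}

theorem Connected.card_degree_le_one_le_two [Fintype V] [DecidableRel G.Adj] (hG : G.Connected)
    (hdeg : ∀ v, G.degree v ≤ 2) : #{v | G.degree v ≤ 1} ≤ 2 := by
  have hedges := hG.card_vert_le_card_edgeSet_add_one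
  rw [Nat.card_eq_fintype_card, Nat.card_eq_fintype_card, ← edgeFinset_card] at hedges
  have hsum : ∑ v, (G.degree v + if G.degree v ≤ 1 then 1 else 0) ≤ ∑ _v : V, 2 :=
    sum_le_sum fun v _ => by split_ifs <;> grind
  rw [sum_add_distrib, sum_degrees_eq_twice_card_edges, ← card_filter, sum_const, card_univ,
    smul_eq_mul] at hsum
  omega

theorem ncard_reachable_degree_le_one_le_two [Fintype V] [DecidableRel G.Adj]
    (hdeg : ∀ v, G.degree v ≤ 2) (x : V) :
    {v | G.Reachable x v ∧ G.degree v ≤ 1}.ncard ≤ 2 := by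
  classical
  set C := G.connectedComponentMk x
  have hdegC (v : C) : C.toSimpleGraph.degree v = G.degree v := by
    convert degree_induce_of_neighborSet_subset (s := C.supp) (v := ⟨v, v.2⟩) fun w hw =>
      (ConnectedComponent.connectedComponentMk_eq_of_adj hw).symm.trans v.2 <;> rfl
  have hsub : {v | G.Reachable x v ∧ G.degree v ≤ 1} ⊆
      Subtype.val '' (↑({w | C.toSimpleGraph.degree w ≤ 1} : Finset C) : Set C) :=
    fun v ⟨hxv, hv⟩ => ⟨⟨v, ConnectedComponent.eq.2 hxv.symm⟩, by simpa [hdegC] using hv, rfl⟩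
  calc {v | G.Reachable x v ∧ G.degree v ≤ 1}.ncard
      ≤ (Subtype.val '' (↑({w | C.toSimpleGraph.degree w ≤ 1} : Finset C) : Set C)).ncard :=
        Set.ncard_le_ncard hsub (Set.toFinite _)
    _ ≤ #{w | C.toSimpleGraph.degree w ≤ 1} := (Set.ncard_image_le (Set.toFinite _)).trans_eq
        (Set.ncard_coe_finset _)
    _ ≤ 2 :=
      C.connected_toSimpleGraph.card_degree_le_one_le_two fun v => (hdegC v).trans_le (hdeg v)

end SimpleGraph

namespace Vizing

variable {V K : Type*} {c : Sym2 V → K} {E : Finset (Sym2 V)} {x y₀ u v : V} {α β γ : K}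

def IsProperOn (c : Sym2 V → K) (E : Finset (Sym2 V)) : Prop :=
  ∀ e₁ ∈ E, ∀ e₂ ∈ E, e₁ ≠ e₂ → (∃ v, v ∈ e₁ ∧ v ∈ e₂) → c e₁ ≠ c e₂

def IsMissingAt (c : Sym2 V → K) (E : Finset (Sym2 V)) (v : V) (γ : K) : Prop :=
  ∀ e ∈ E, v ∈ e → c e ≠ γ

section Update

variable [DecidableEq V] {e : Sym2 V}

theorem IsProperOn.update (hc : IsProperOn c E) (hγ : ∀ v ∈ e, IsMissingAt c E v γ) :
    IsProperOn (Function.update c e γ) (insert e E) := by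
  rintro e₁ he₁ e₂ he₂ hne ⟨v, hv₁, hv₂⟩
  rcases eq_or_ne e₁ e with h₁ | h₁ <;> rcases eq_or_ne e₂ e with h₂ | h₂
  · exact absurd (h₁.trans h₂.symm) hne
  · subst h₁
    rw [Function.update_self, Function.update_of_ne h₂]
    exact (hγ v hv₁ e₂ (mem_of_mem_insert_of_ne he₂ h₂) hv₂).symm
  · subst h₂
    rw [Function.update_of_ne h₁, Function.update_self]
    exact hγ v hv₂ e₁ (mem_of_mem_insert_of_ne he₁ h₁) hv₁
  · rw [Function.update_of_ne h₁, Function.update_of_ne h₂]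
    exact hc e₁ (mem_of_mem_insert_of_ne he₁ h₁) e₂ (mem_of_mem_insert_of_ne he₂ h₂) hne
      ⟨v, hv₁, hv₂⟩

theorem IsProperOn.isMissingAt_update (hc : IsProperOn c E) (he : e ∈ E) (hv : v ∈ e)
    (hγ : γ ≠ c e) : IsMissingAt (Function.update c e γ) E v (c e) := by
  intro e' he' hv'
  rcases eq_or_ne e' e with rfl | hne
  · rwa [Function.update_self]
  · rw [Function.update_of_ne hne]
    exact hc e' he' e he hne ⟨v, hv', hv⟩

theorem isMissingAt_update_of_notMem (hv : v ∉ e) :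
    IsMissingAt (Function.update c e γ) E v β ↔ IsMissingAt c E v β := by
  refine forall₂_congr fun e' _ => imp_congr_right fun hv' => ?_
  rw [Function.update_of_ne (by rintro rfl; exact hv hv')]

end Update

structure IsFan (c : Sym2 V → K) (E : Finset (Sym2 V)) (x : V) (y : ℕ → V) (k : ℕ) : Prop where
  notMem_zero : s(x, y 0) ∉ E
  mem : ∀ i ≤ k, 0 < i → s(x, y i) ∈ E
  ne : ∀ i ≤ k, y i ≠ x
  injOn : Set.InjOn y (Set.Iic k)
  isMissingAt : ∀ i < k, IsMissingAt c E (y i) (c s(x, y (i + 1)))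

namespace IsFan

variable {y : ℕ → V} {i j k m : ℕ}

theorem mono (hF : IsFan c E x y k) (hm : m ≤ k) : IsFan c E x y m where
  notMem_zero := hF.notMem_zero
  mem i hi := hF.mem i (hi.trans hm)
  ne i hi := hF.ne i (hi.trans hm)
  injOn := hF.injOn.mono (Set.Iic_subset_Iic.2 hm)
  isMissingAt i hi := hF.isMissingAt i (hi.trans_le hm)

theorem notMem_edge (hF : IsFan c E x y k) (hi : i ≤ k) (hj : j ≤ k) (hij : i ≠ j) :
    y i ∉ s(x, y j) := by
  rw [Sym2.mem_iff, not_or]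
  exact ⟨hF.ne i hi, fun h => hij (hF.injOn hi hj h)⟩

theorem edge_ne (hF : IsFan c E x y k) (hi : i ≤ k) (hj : j ≤ k) (hij : i ≠ j) :
    s(x, y i) ≠ s(x, y j) := fun h => hij (hF.injOn hi hj (Sym2.congr_right.1 h))

theorem snoc (hF : IsFan c E x y k) (hu : s(x, u) ∈ E) (hux : u ≠ x) (hnew : ∀ i ≤ k, y i ≠ u)
    (hmiss : IsMissingAt c E (y k) (c s(x, u))) :
    IsFan c E x (Function.update y (k + 1) u) (k + 1) := by
  have hy : ∀ i ≤ k, Function.update y (k + 1) u i = y i := fun i hi =>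
    Function.update_of_ne (by omega) _ _
  refine ⟨by rw [hy 0 k.zero_le]; exact hF.notMem_zero, fun i hi hi0 => ?_, fun i hi => ?_,
    fun i hi j hj hij => ?_, fun i hi => ?_⟩
  · rcases (Nat.le_succ_iff.1 hi) with hi | rfl
    · rw [hy i hi]; exact hF.mem i hi hi0
    · rwa [Function.update_self]
  · rcases (Nat.le_succ_iff.1 hi) with hi | rfl
    · rw [hy i hi]; exact hF.ne i hi
    · rwa [Function.update_self]
  · simp only [Set.mem_Iic] at hi hj
    rcases (Nat.le_succ_iff.1 hi) with hi | rfl <;> rcases (Nat.le_succ_iff.1 hj) with hj | rfl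
    · rw [hy i hi, hy j hj] at hij; exact hF.injOn hi hj hij
    · rw [hy i hi, Function.update_self] at hij; exact absurd hij (hnew i hi)
    · rw [hy j hj, Function.update_self] at hij; exact absurd hij.symm (hnew j hj)
    · rfl
  · rcases (Nat.lt_succ_iff_lt_or_eq.1 hi) with hi | rfl
    · rw [hy i hi.le, hy (i + 1) hi]; exact hF.isMissingAt i hi
    · rwa [hy i le_rfl, Function.update_self]

theorem update_last [DecidableEq V] (hF : IsFan c E x y (k + 1)) :
    IsFan (Function.update c s(x, y (k + 1)) γ) E x y k where
  notMem_zero := hF.notMem_zero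
  mem i hi := hF.mem i (by omega)
  ne i hi := hF.ne i (by omega)
  injOn := hF.injOn.mono (Set.Iic_subset_Iic.2 k.le_succ)
  isMissingAt i hi := by
    rw [Function.update_of_ne (hF.edge_ne (by omega) le_rfl (by omega)),
      isMissingAt_update_of_notMem (hF.notMem_edge (by omega) le_rfl (by omega))]
    exact hF.isMissingAt i (by omega)

theorem rotate [DecidableEq V] (hF : IsFan c E x y k) (hc : IsProperOn c E)
    (hβx : IsMissingAt c E x β) (hβy : IsMissingAt c E (y k) β) :
    ∃ c' : Sym2 V → K, IsProperOn c' (insert s(x, y 0) E) := by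
  induction k generalizing c β with
  | zero => exact ⟨_, hc.update (Sym2.forall_mem_pair.2 ⟨hβx, hβy⟩)⟩
  | succ k ih =>
    have he : s(x, y (k + 1)) ∈ E := hF.mem _ le_rfl k.succ_pos
    have hβe : β ≠ c s(x, y (k + 1)) := fun h => hβx _ he (Sym2.mem_mk_left _ _) h.symm
    have hc' := hc.update (Sym2.forall_mem_pair.2 ⟨hβx, hβy⟩)
    rw [insert_eq_of_mem he] at hc'
    refine ih hF.update_last hc' (hc.isMissingAt_update he (Sym2.mem_mk_left _ _) hβe) ?_
    rw [isMissingAt_update_of_notMem (hF.notMem_edge k.le_succ le_rfl k.succ_ne_self.symm)]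
    exact hF.isMissingAt k k.lt_succ_self

end IsFan

def kempeGraph (c : Sym2 V → K) (E : Finset (Sym2 V)) (α β : K) : SimpleGraph V :=
  fromEdgeSet {e | e ∈ E ∧ (c e = α ∨ c e = β)}

theorem kempeGraph_adj {a b : V} :
    (kempeGraph c E α β).Adj a b ↔ (s(a, b) ∈ E ∧ (c s(a, b) = α ∨ c s(a, b) = β)) ∧ a ≠ b :=
  fromEdgeSet_adj _

theorem kempeGraph_reachable_of_mem {e : Sym2 V} {w : V} (he : e ∈ E) (hce : c e = α ∨ c e = β)
    (hv : v ∈ e) (hw : w ∈ e) (hxv : (kempeGraph c E α β).Reachable x v) :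
    (kempeGraph c E α β).Reachable x w := by
  rcases eq_or_ne v w with rfl | hvw
  · exact hxv
  · obtain rfl := (Sym2.mem_and_mem_iff hvw).1 ⟨hv, hw⟩
    exact hxv.trans (kempeGraph_adj.2 ⟨⟨he, hce⟩, hvw⟩).reachable

theorem degree_kempeGraph_le_card [Fintype ((kempeGraph c E α β).neighborSet v)]
    (hc : IsProperOn c E) (B : Finset K) (hB : ∀ e ∈ E, v ∈ e → (c e = α ∨ c e = β) → c e ∈ B) :
    (kempeGraph c E α β).degree v ≤ #B := by
  rw [← card_neighborFinset_eq_degree]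
  refine card_le_card_of_injOn (fun w => c s(v, w)) (fun w hw => ?_) fun w₁ hw₁ w₂ hw₂ h => ?_
  · obtain ⟨⟨he, hce⟩, -⟩ := kempeGraph_adj.1 ((mem_neighborFinset _ _ _).1 hw)
    exact hB _ he (Sym2.mem_mk_left _ _) hce
  · by_contra hne
    obtain ⟨⟨he₁, -⟩, -⟩ := kempeGraph_adj.1 ((mem_neighborFinset _ _ _).1 hw₁)
    obtain ⟨⟨he₂, -⟩, -⟩ := kempeGraph_adj.1 ((mem_neighborFinset _ _ _).1 hw₂)
    exact hc _ he₁ _ he₂ (fun h => hne (Sym2.congr_right.1 h))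
      ⟨v, Sym2.mem_mk_left _ _, Sym2.mem_mk_left _ _⟩ h

theorem IsProperOn.ncard_reachable_isMissingAt_le_two [Fintype V] (hc : IsProperOn c E) (x : V) :
    {v | (kempeGraph c E α β).Reachable x v ∧
      (IsMissingAt c E v α ∨ IsMissingAt c E v β)}.ncard ≤ 2 := by
  classical
  set H := kempeGraph c E α β
  have hdeg (v : V) : H.degree v ≤ 2 := by
    refine (degree_kempeGraph_le_card hc {α, β} fun e _ _ hce => ?_).trans card_le_two
    rcases hce with h | h <;> simp [h]
  have hsub : {v | H.Reachable x v ∧ (IsMissingAt c E v α ∨ IsMissingAt c E v β)} ⊆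
      {v | H.Reachable x v ∧ H.degree v ≤ 1} := by
    rintro v ⟨hxv, hv⟩
    refine ⟨hxv, ?_⟩
    rcases hv with hv | hv
    · refine (degree_kempeGraph_le_card hc {β} fun e he hve hce => ?_).trans_eq (card_singleton _)
      exact mem_singleton.2 (hce.resolve_left (hv e he hve))
    · refine (degree_kempeGraph_le_card hc {α} fun e he hve hce => ?_).trans_eq (card_singleton _)
      exact mem_singleton.2 (hce.resolve_right (hv e he hve))
  exact (Set.ncard_le_ncard hsub (Set.toFinite _)).trans
    (ncard_reachable_degree_le_one_le_two hdeg x)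

open scoped Classical in
noncomputable def kempeSwap [DecidableEq K] (c : Sym2 V → K) (E : Finset (Sym2 V)) (α β : K)
    (x : V) : Sym2 V → K :=
  fun e => if ∃ v ∈ e, (kempeGraph c E α β).Reachable x v then Equiv.swap α β (c e) else c e

section KempeSwap

variable [DecidableEq K] {e : Sym2 V}

theorem kempeSwap_of_reachable (hv : v ∈ e) (hxv : (kempeGraph c E α β).Reachable x v) :
    kempeSwap c E α β x e = Equiv.swap α β (c e) :=
  if_pos ⟨v, hv, hxv⟩

theorem kempeSwap_of_ne (hα : c e ≠ α) (hβ : c e ≠ β) : kempeSwap c E α β x e = c e := by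
  unfold kempeSwap
  split_ifs
  exacts [Equiv.swap_apply_of_ne_of_ne hα hβ, rfl]

theorem kempeSwap_of_not_reachable (he : e ∈ E) (hv : v ∈ e)
    (hxv : ¬(kempeGraph c E α β).Reachable x v) : kempeSwap c E α β x e = c e := by
  by_cases hce : c e = α ∨ c e = β
  · exact if_neg fun ⟨w, hw, hxw⟩ => hxv (kempeGraph_reachable_of_mem he hce hw hv hxw)
  · rw [not_or] at hce
    exact kempeSwap_of_ne hce.1 hce.2

theorem IsProperOn.kempeSwap (hc : IsProperOn c E) : IsProperOn (kempeSwap c E α β x) E := by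
  rintro e₁ he₁ e₂ he₂ hne ⟨v, hv₁, hv₂⟩
  by_cases hxv : (kempeGraph c E α β).Reachable x v
  · rw [kempeSwap_of_reachable hv₁ hxv, kempeSwap_of_reachable hv₂ hxv]
    exact (Equiv.swap α β).injective.ne (hc e₁ he₁ e₂ he₂ hne ⟨v, hv₁, hv₂⟩)
  · rw [kempeSwap_of_not_reachable he₁ hv₁ hxv, kempeSwap_of_not_reachable he₂ hv₂ hxv]
    exact hc e₁ he₁ e₂ he₂ hne ⟨v, hv₁, hv₂⟩

theorem isMissingAt_kempeSwap_iff_of_reachable (hxv : (kempeGraph c E α β).Reachable x v) :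
    IsMissingAt (kempeSwap c E α β x) E v γ ↔ IsMissingAt c E v (Equiv.swap α β γ) := by
  refine forall₂_congr fun e _ => imp_congr_right fun hv => ?_
  rw [kempeSwap_of_reachable hv hxv, Ne, Equiv.swap_apply_eq_iff]

theorem isMissingAt_kempeSwap_iff_of_not_reachable
    (hxv : ¬(kempeGraph c E α β).Reachable x v) :
    IsMissingAt (kempeSwap c E α β x) E v γ ↔ IsMissingAt c E v γ :=
  forall₂_congr fun _ he => imp_congr_right fun hv => by
    rw [kempeSwap_of_not_reachable he hv hxv]

theorem IsFan.kempeSwap {y : ℕ → V} {k : ℕ} (hF : IsFan c E x y k)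
    (hfix : ∀ i < k, ¬(kempeGraph c E α β).Reachable x (y i) →
      c s(x, y (i + 1)) ≠ α ∧ c s(x, y (i + 1)) ≠ β) :
    IsFan (kempeSwap c E α β x) E x y k where
  notMem_zero := hF.notMem_zero
  mem := hF.mem
  ne := hF.ne
  injOn := hF.injOn
  isMissingAt i hi := by
    by_cases hxy : (kempeGraph c E α β).Reachable x (y i)
    · rw [kempeSwap_of_reachable (Sym2.mem_mk_left _ _) (Reachable.refl x),
        isMissingAt_kempeSwap_iff_of_reachable hxy, Equiv.swap_apply_self]
      exact hF.isMissingAt i hi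
    · rw [kempeSwap_of_ne (hfix i hi hxy).1 (hfix i hi hxy).2,
        isMissingAt_kempeSwap_iff_of_not_reachable hxy]
      exact hF.isMissingAt i hi

end KempeSwap

namespace IsFan

variable {y : ℕ → V} {k m : ℕ}

theorem exists_isProperOn_insert_of_kempe [Fintype V] [DecidableEq V] [DecidableEq K]
    (hF : IsFan c E x y k) (hc : IsProperOn c E) (hα : IsMissingAt c E x α)
    (hβ : IsMissingAt c E (y k) β) (hm : 0 < m) (hmk : m < k) (hcm : c s(x, y m) = β) :
    ∃ c' : Sym2 V → K, IsProperOn c' (insert s(x, y 0) E) := by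
  set H := kempeGraph c E α β
  have hc' : IsProperOn (Vizing.kempeSwap c E α β x) E := hc.kempeSwap
  have hβx : IsMissingAt (Vizing.kempeSwap c E α β x) E x β := by
    rwa [isMissingAt_kempeSwap_iff_of_reachable (Reachable.refl x),
      Equiv.swap_apply_right]
  have hβm : IsMissingAt c E (y (m - 1)) β := by
    simpa [Nat.sub_add_cancel hm, hcm] using hF.isMissingAt (m - 1) (by omega)
  have hfix : ∀ j ≤ k, 0 < j → j ≠ m → c s(x, y j) ≠ α ∧ c s(x, y j) ≠ β := fun j hj hj0 hjm =>
    ⟨hα _ (hF.mem j hj hj0) (Sym2.mem_mk_left _ _),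
      fun h => hc _ (hF.mem j hj hj0) _ (hF.mem m hmk.le hm) (hF.edge_ne hj hmk.le hjm)
        ⟨x, Sym2.mem_mk_left _ _, Sym2.mem_mk_left _ _⟩ (h.trans hcm.symm)⟩
  by_cases hxm : H.Reachable x (y (m - 1))
  · by_cases hxk : H.Reachable x (y k)
    · exfalso
      have hends : ({x, y (m - 1), y k} : Set V) ⊆
          {v | H.Reachable x v ∧ (IsMissingAt c E v α ∨ IsMissingAt c E v β)} := by
        rintro v (rfl | rfl | rfl)
        exacts [⟨.refl v, .inl hα⟩, ⟨hxm, .inr hβm⟩, ⟨hxk, .inr hβ⟩]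
      have hmk' : y (m - 1) ≠ y k := fun h =>
        absurd (hF.injOn (Set.mem_Iic.2 (by omega)) (Set.mem_Iic.2 le_rfl) h) (by omega)
      have h3 := (Set.ncard_le_ncard hends (Set.toFinite _)).trans
        (hc.ncard_reachable_isMissingAt_le_two x)
      rw [Set.ncard_eq_three.2
        ⟨_, _, _, (hF.ne _ (by omega)).symm, (hF.ne _ le_rfl).symm, hmk', rfl⟩] at h3
      omega
    · refine (hF.kempeSwap fun i hi hxi => hfix (i + 1) hi i.succ_pos ?_).rotate hc' hβx ?_
      · rintro rfl
        exact hxi hxm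
      · rwa [isMissingAt_kempeSwap_iff_of_not_reachable hxk]
  · refine ((hF.mono (show m - 1 ≤ k by omega)).kempeSwap fun i hi _ =>
      hfix (i + 1) (by omega) i.succ_pos (by omega)).rotate hc' hβx ?_
    rwa [isMissingAt_kempeSwap_iff_of_not_reachable hxm]

theorem exists_isProperOn_insert [Fintype V] [DecidableEq V] [DecidableEq K]
    (hF : IsFan c E x y k) (hc : IsProperOn c E) (hloop : ∀ e ∈ E, ¬e.IsDiag)
    (hmax : ∀ u ≠ x, s(x, u) ∈ E → IsMissingAt c E (y k) (c s(x, u)) → ∃ i ≤ k, y i = u)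
    (hα : IsMissingAt c E x α) (hβ : IsMissingAt c E (y k) β) :
    ∃ c' : Sym2 V → K, IsProperOn c' (insert s(x, y 0) E) := by
  by_cases hβx : IsMissingAt c E x β
  · exact hF.rotate hc hβx hβ
  obtain ⟨e, he, hxe, hce⟩ : ∃ e ∈ E, x ∈ e ∧ c e = β := by
    simpa [IsMissingAt] using hβx
  obtain ⟨u, rfl⟩ := Sym2.mem_iff_exists.1 hxe
  have hux : u ≠ x := fun h => hloop _ he (Sym2.mk_isDiag_iff.2 h.symm)
  obtain ⟨m, hmk, rfl⟩ := hmax u hux he (hce ▸ hβ)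
  have hm : 0 < m := Nat.pos_of_ne_zero fun h => hF.notMem_zero (h ▸ he)
  have hmk' : m < k := lt_of_le_of_ne hmk fun h => hβ _ he (h ▸ Sym2.mem_mk_right _ _) hce
  exact hF.exists_isProperOn_insert_of_kempe hc hα hβ hm hmk' hce

end IsFan

theorem exists_maximal_isFan [Finite V] (h0 : s(x, y₀) ∉ E) (hy₀ : y₀ ≠ x) :
    ∃ (y : ℕ → V) (k : ℕ), IsFan c E x y k ∧ y 0 = y₀ ∧
      ∀ u ≠ x, s(x, u) ∈ E → IsMissingAt c E (y k) (c s(x, u)) → ∃ i ≤ k, y i = u := by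
  classical
  let P (k : ℕ) : Prop := ∃ y : ℕ → V, IsFan c E x y k ∧ y 0 = y₀
  have hP0 : P 0 := ⟨fun _ => y₀, ⟨h0, by omega, fun _ _ => hy₀, fun _ _ _ _ _ => by simp_all,
    by omega⟩, rfl⟩
  have hbound (k : ℕ) (hk : P k) : k < Nat.card V := by
    obtain ⟨y, hF, -⟩ := hk
    have := Nat.card_le_card_of_injective (fun i : Fin (k + 1) => y i) fun i j h =>
      Fin.ext (hF.injOn (Set.mem_Iic.2 (Nat.lt_succ_iff.1 i.2))
        (Set.mem_Iic.2 (Nat.lt_succ_iff.1 j.2)) h)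
    simpa using this
  obtain ⟨y, hF, hy0⟩ := Nat.findGreatest_spec (Nat.zero_le _) hP0
  refine ⟨y, _, hF, hy0, fun u hux hu hmiss => ?_⟩
  by_contra! hnew
  have hP : P (Nat.findGreatest P (Nat.card V) + 1) :=
    ⟨_, hF.snoc hu hux hnew hmiss, by rwa [Function.update_of_ne (Nat.succ_ne_zero _).symm]⟩
  have := Nat.le_findGreatest (P := P) (hbound _ hP).le hP
  omega

section Graph

variable [Fintype V] [Fintype K] {G : SimpleGraph V} [DecidableRel G.Adj]

theorem exists_isMissingAt (hK : G.maxDegree < Fintype.card K) (hE : E ⊆ G.edgeFinset)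
    (c : Sym2 V → K) (v : V) : ∃ γ, IsMissingAt c E v γ := by
  classical
  have hcard : #((E.filter (v ∈ ·)).image c) < #(univ : Finset K) :=
    calc #((E.filter (v ∈ ·)).image c)
        ≤ #(E.filter (v ∈ ·)) := card_image_le
      _ ≤ #(G.incidenceFinset v) := card_le_card fun e he => by
          rw [mem_filter] at he
          exact (G.mem_incidenceFinset v e).2 ⟨mem_edgeFinset.1 (hE he.1), he.2⟩
      _ = G.degree v := G.card_incidenceFinset_eq_degree v
      _ < #(univ : Finset K) := (G.degree_le_maxDegree v).trans_lt (by rwa [card_univ])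
  obtain ⟨γ, -, hγ⟩ := exists_mem_notMem_of_card_lt_card hcard
  exact ⟨γ, fun e he hv hce => hγ (mem_image.2 ⟨e, mem_filter.2 ⟨he, hv⟩, hce⟩)⟩

theorem exists_isProperOn_insert [DecidableEq V] [DecidableEq K]
    (hK : G.maxDegree < Fintype.card K) (hE : E ⊆ G.edgeFinset) (hc : IsProperOn c E)
    (hxy : G.Adj x y₀) (hnew : s(x, y₀) ∉ E) :
    ∃ c' : Sym2 V → K, IsProperOn c' (insert s(x, y₀) E) := by
  obtain ⟨y, k, hF, rfl, hmax⟩ := exists_maximal_isFan (c := c) hnew hxy.ne'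
  obtain ⟨α, hα⟩ := exists_isMissingAt hK hE c x
  obtain ⟨β, hβ⟩ := exists_isMissingAt hK hE c (y k)
  exact hF.exists_isProperOn_insert hc
    (fun e he => G.not_isDiag_of_mem_edgeSet (mem_edgeFinset.1 (hE he))) hmax hα hβ

theorem exists_isProperOn (hK : G.maxDegree < Fintype.card K) (E : Finset (Sym2 V))
    (hE : E ⊆ G.edgeFinset) : ∃ c : Sym2 V → K, IsProperOn c E := by
  classical
  induction E using Finset.induction_on with
  | empty =>
    have : Nonempty K := Fintype.card_pos_iff.1 (by omega)
    exact ⟨fun _ => Classical.arbitrary K, by simp [IsProperOn]⟩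
  | insert e E hnew ih =>
    obtain ⟨c, hc⟩ := ih ((subset_insert e E).trans hE)
    induction e using Sym2.ind with
    | h a b =>
      exact exists_isProperOn_insert hK ((subset_insert _ E).trans hE) hc
        (mem_edgeFinset.1 (hE (mem_insert_self _ E))) hnew

end Graph

end Vizing

theorem vizing_edge_coloring_general {V : Type*} [Fintype V]
    (G : SimpleGraph V) [DecidableRel G.Adj] :
    ∃ C : Sym2 V → Fin (G.maxDegree + 1),
      ∀ e₁ ∈ G.edgeSet, ∀ e₂ ∈ G.edgeSet,
        e₁ ≠ e₂ → (∃ v : V, v ∈ e₁ ∧ v ∈ e₂) → C e₁ ≠ C e₂ := by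
  obtain ⟨c, hc⟩ := Vizing.exists_isProperOn (K := Fin (G.maxDegree + 1)) (by simp)
    G.edgeFinset subset_rfl
  exact ⟨c, fun e₁ he₁ e₂ he₂ => hc e₁ (mem_edgeFinset.2 he₁) e₂
    (mem_edgeFinset.2 he₂)⟩

/-- Vizing's Theorem: every graph with maximum degree Δ admits a proper
edge coloring with at most Δ + 1 colors. -/
theorem vizing_edge_coloring {V : Type*} [Fintype V] [DecidableEq V]
    (G : SimpleGraph V) [DecidableRel G.Adj] :
    ∃ C : Sym2 V → Fin (G.maxDegree + 1),
      ∀ e₁ ∈ G.edgeSet, ∀ e₂ ∈ G.edgeSet,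
        e₁ ≠ e₂ → (∃ v : V, v ∈ e₁ ∧ v ∈ e₂) → C e₁ ≠ C e₂ :=
  vizing_edge_coloring_general G
end

section
/- Let L be a proper c-colored labeling with exactly k weak edges for a graph G=(V,E), and let e={u,v} with e ∉ E. If in G'=(V, E ∪ {e}) every vertex w in the closed neighborhood of u has degree at most c-1, then there exists a proper c-colored labeling L' for G' with exactly k weak edges. -/
open SimpleGraph

/-- Number of weak edges (edges labeled `0`) of a labeling. -/
noncomputable def weakCount {V : Type*} (G : SimpleGraph V) (ℓ : Sym2 V → ℕ) : ℕ :=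
  {e ∈ G.edgeSet | ℓ e = 0}.ncard

/-- A proper `c`-colored labeling: every edge gets a color in `{0,…,c}`
(color `0` meaning weak), and no two distinct incident edges share
a strong color. -/
def IsProperLabeling {V : Type*} (G : SimpleGraph V) (c : ℕ) (ℓ : Sym2 V → ℕ) : Prop :=
  (∀ e ∈ G.edgeSet, ℓ e ≤ c) ∧
  ∀ e₁ ∈ G.edgeSet, ∀ e₂ ∈ G.edgeSet,
    e₁ ≠ e₂ → (∃ v : V, v ∈ e₁ ∧ v ∈ e₂) → ℓ e₁ = ℓ e₂ → ℓ e₁ = 0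

/-!
Vizing's fan argument. Every vertex of the closed neighbourhood of `u` has fewer than `c` edges
in `G`, so it misses some strong colour. Grow a fan `y₀ = v, y₁, …, yₘ` of neighbours of `u` in
which the colour of `u yᵣ₊₁` is missing at `yᵣ`, and let `β` be missing at `yₘ`. If `β` is also
missing at `u`, rotating the fan (each `u yᵣ` takes the colour of `u yᵣ₊₁`, and `u yₘ` takes
`β`) colours `uv`. If the `β`-edge at `u` leaves the fan, it extends the fan. Otherwise it is
some `u yⱼ`; with `α` missing at `u`, the vertices `u`, `yⱼ₋₁` and `yₘ` all end `α/β`-chains,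
and since a chain has only two ends, swapping `α` and `β` on the chain of `yⱼ₋₁` or of `yₘ`
lets the fan up to that vertex rotate with colour `α`. Weak edges are never recoloured.
-/

open scoped Finset

namespace SimpleGraph

variable {V : Type*} {G : SimpleGraph V} [Fintype V] [DecidableRel G.Adj]

theorem Connected.card_filter_degree_lt_two_le (hG : G.Connected)
    (hdeg : ∀ v, G.degree v ≤ 2) : #{v | G.degree v < 2} ≤ 2 := by
  have hedges := hG.card_vert_le_card_edgeSet_add_one
  rw [Nat.card_eq_fintype_card, Nat.card_eq_fintype_card, ← edgeFinset_card] at hedges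
  have hsum := G.sum_degrees_eq_twice_card_edges
  have hbound : ∑ v, (G.degree v + if G.degree v < 2 then 1 else 0) ≤ ∑ _v : V, 2 :=
    Finset.sum_le_sum fun v _ => by
      have := hdeg v
      split_ifs <;> omega
  rw [Finset.sum_add_distrib, ← Finset.card_filter, Finset.sum_const, Finset.card_univ,
    smul_eq_mul] at hbound
  omega

theorem Reachable.not_reachable_of_degree_lt_two (hdeg : ∀ v, G.degree v ≤ 2) {a b d : V}
    (hab : a ≠ b) (had : a ≠ d) (hbd : b ≠ d) (ha : G.degree a < 2) (hb : G.degree b < 2)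
    (hd : G.degree d < 2) (h : G.Reachable a b) : ¬G.Reachable a d := by
  classical
  intro h'
  set C := (G.connectedComponentMk a).supp
  have hdegC : ∀ v : C, (G.induce C).degree v = G.degree v := fun v =>
    degree_induce_of_neighborSet_subset fun _ hw =>
      ConnectedComponent.mem_supp_of_adj_mem_supp _ v.2 hw
  have hmem : ∀ {v}, G.Reachable a v → v ∈ C := fun hv => ConnectedComponent.eq.2 hv.symm
  let a' : C := ⟨a, hmem .rfl⟩
  let b' : C := ⟨b, hmem h⟩
  let d' : C := ⟨d, hmem h'⟩
  have hsub : ({a', b', d'} : Finset C) ⊆ ({v | (G.induce C).degree v < 2} : Finset C) := by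
    intro v hv
    simp only [Finset.mem_insert, Finset.mem_singleton] at hv
    rcases hv with rfl | rfl | rfl <;>
      simp only [Finset.mem_filter, Finset.mem_univ, true_and, hdegC] <;> assumption
  have := (Finset.card_le_card hsub).trans
    ((G.connectedComponentMk a).maximal_connected_induce_supp.prop.card_filter_degree_lt_two_le
      fun v => (hdegC v).trans_le (hdeg v))
  rw [Finset.card_eq_three.2
    ⟨a', b', d', by simpa [a', b'], by simpa [a', d'], by simpa [b', d'], rfl⟩] at this
  omega

end SimpleGraph

section

variable {V : Type*} {G : SimpleGraph V} {c : ℕ} {ℓ : Sym2 V → ℕ}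

def weakEdges (G : SimpleGraph V) (ℓ : Sym2 V → ℕ) : Set (Sym2 V) :=
  {e ∈ G.edgeSet | ℓ e = 0}

def IsMissingAt (G : SimpleGraph V) (ℓ : Sym2 V → ℕ) (w : V) (γ : ℕ) : Prop :=
  ∀ z, G.Adj w z → ℓ s(w, z) ≠ γ

theorem isProperLabeling_iff : IsProperLabeling G c ℓ ↔
    (∀ a b, G.Adj a b → ℓ s(a, b) ≤ c) ∧
    ∀ w a b, G.Adj w a → G.Adj w b → ℓ s(w, a) ≠ 0 → ℓ s(w, a) = ℓ s(w, b) → a = b := by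
  constructor
  · rintro ⟨hle, hinj⟩
    refine ⟨fun a b h => hle _ h, fun w a b ha hb h0 hab => ?_⟩
    by_contra hne
    exact h0 (hinj _ ha _ hb (mt Sym2.congr_right.1 hne) ⟨w, by simp, by simp⟩ hab)
  · rintro ⟨hle, hinj⟩
    refine ⟨fun e he => ?_, fun e₁ he₁ e₂ he₂ hne ⟨w, hw₁, hw₂⟩ hc => ?_⟩
    · induction e using Sym2.ind with
      | h a b => exact hle a b he
    · obtain ⟨a, rfl⟩ := Sym2.mem_iff_exists.1 hw₁
      obtain ⟨b, rfl⟩ := Sym2.mem_iff_exists.1 hw₂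
      by_contra h0
      exact hne (congrArg _ (hinj w a b he₁ he₂ h0 hc))

theorem exists_isMissingAt_of_degree_lt {w : V} [Fintype (G.neighborSet w)]
    (hw : G.degree w < c) : ∃ γ, γ ≠ 0 ∧ γ ≤ c ∧ IsMissingAt G ℓ w γ := by
  classical
  by_contra! hfull
  have hsub : Finset.Icc 1 c ⊆ (G.neighborFinset w).image fun z => ℓ s(w, z) := by
    intro γ hγ
    rw [Finset.mem_Icc] at hγ
    obtain ⟨z, hz, hzγ⟩ : ∃ z, G.Adj w z ∧ ℓ s(w, z) = γ := by
      simpa [IsMissingAt] using hfull γ (by omega) hγ.2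
    exact Finset.mem_image.2 ⟨z, (mem_neighborFinset _ _ _).2 hz, hzγ⟩
  have := (Finset.card_le_card hsub).trans Finset.card_image_le
  rw [Nat.card_Icc, card_neighborFinset_eq_degree] at this
  omega

theorem IsMissingAt.update [DecidableEq V] {w : V} {δ γ : ℕ} (h : IsMissingAt G ℓ w δ)
    (hγ : γ ≠ δ) (e : Sym2 V) : IsMissingAt G (Function.update ℓ e γ) w δ := by
  intro z hz
  by_cases he : s(w, z) = e
  · rw [he, Function.update_self]
    exact hγ
  · rw [Function.update_of_ne he]
    exact h z hz

namespace IsProperLabeling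

variable (hℓ : IsProperLabeling G c ℓ) {a b w : V}
include hℓ

theorem le (h : G.Adj a b) : ℓ s(a, b) ≤ c :=
  (isProperLabeling_iff.1 hℓ).1 a b h

theorem eq_of_color_eq (ha : G.Adj w a) (hb : G.Adj w b) (h0 : ℓ s(w, a) ≠ 0)
    (hab : ℓ s(w, a) = ℓ s(w, b)) : a = b :=
  (isProperLabeling_iff.1 hℓ).2 w a b ha hb h0 hab

theorem isMissingAt_update [DecidableEq V] (hb : G.Adj w b) (h0 : ℓ s(w, b) ≠ 0) {γ : ℕ}
    (hγ : γ ≠ ℓ s(w, b)) : IsMissingAt G (Function.update ℓ s(w, b) γ) w (ℓ s(w, b)) := by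
  intro z hz
  by_cases hzb : z = b
  · subst hzb
    simpa using hγ
  · rw [Function.update_of_ne (mt Sym2.congr_right.1 hzb)]
    exact fun h => hzb (hℓ.eq_of_color_eq hz hb (h ▸ h0) h)

theorem update_sup_edge [DecidableEq V] {γ : ℕ} (hγc : γ ≤ c) (ha : IsMissingAt G ℓ a γ)
    (hb : IsMissingAt G ℓ b γ) :
    IsProperLabeling (G ⊔ edge a b) c (Function.update ℓ s(a, b) γ) := by
  have hGadj : ∀ p q, (G ⊔ edge a b).Adj p q → s(p, q) ≠ s(a, b) → G.Adj p q := by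
    intro p q hpq hne
    rw [sup_adj, edge_adj] at hpq
    rcases hpq with h | ⟨⟨rfl, rfl⟩ | ⟨rfl, rfl⟩, -⟩
    · exact h
    · exact absurd rfl hne
    · exact absurd Sym2.eq_swap hne
  have hmissing : ∀ w p q, s(w, p) = s(a, b) → G.Adj w q → ℓ s(w, q) ≠ γ := by
    intro w p q he hq
    rcases Sym2.mem_iff.1 (he ▸ Sym2.mem_mk_left w p) with rfl | rfl
    exacts [ha q hq, hb q hq]
  rw [isProperLabeling_iff]
  refine ⟨fun p q hpq => ?_, fun w p q hp hq h0 hpq => ?_⟩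
  · by_cases he : s(p, q) = s(a, b)
    · rw [he, Function.update_self]
      exact hγc
    · rw [Function.update_of_ne he]
      exact hℓ.le (hGadj p q hpq he)
  · by_cases hep : s(w, p) = s(a, b) <;> by_cases heq : s(w, q) = s(a, b)
    · exact Sym2.congr_right.1 (hep.trans heq.symm)
    · rw [hep, Function.update_self, Function.update_of_ne heq] at hpq
      exact absurd hpq.symm (hmissing w p q hep (hGadj w q hq heq))
    · rw [heq, Function.update_self, Function.update_of_ne hep] at hpq
      exact absurd hpq (hmissing w q p heq (hGadj w p hp hep))
    · rw [Function.update_of_ne hep] at h0 hpq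
      rw [Function.update_of_ne heq] at hpq
      exact hℓ.eq_of_color_eq (hGadj w p hp hep) (hGadj w q hq heq) h0 hpq

end IsProperLabeling

theorem weakEdges_update_sup_edge [DecidableEq V] {a b : V} {γ : ℕ} (hγ : γ ≠ 0)
    (hab : G.Adj a b → ℓ s(a, b) ≠ 0) :
    weakEdges (G ⊔ edge a b) (Function.update ℓ s(a, b) γ) = weakEdges G ℓ := by
  ext e
  by_cases he : e = s(a, b)
  · subst he
    simpa [weakEdges, hγ] using hab
  · simp [weakEdges, he]

/-- `y 0` is the far end of the edge `x (y 0)` still to be coloured; it need not be adjacent to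
`x` in `G`. -/
structure IsFan (G : SimpleGraph V) (ℓ : Sym2 V → ℕ) (x : V) (y : ℕ → V) (m : ℕ) : Prop where
  injOn : Set.InjOn y (Set.Iic m)
  adj : ∀ r < m, G.Adj x (y (r + 1))
  color_ne_zero : ∀ r < m, ℓ s(x, y (r + 1)) ≠ 0
  isMissingAt : ∀ r < m, IsMissingAt G ℓ (y r) (ℓ s(x, y (r + 1)))

theorem isFan_zero (x : V) (y : ℕ → V) : IsFan G ℓ x y 0 where
  injOn a ha b hb _ := by simp_all
  adj r hr := absurd hr r.not_lt_zero
  color_ne_zero r hr := absurd hr r.not_lt_zero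
  isMissingAt r hr := absurd hr r.not_lt_zero

namespace IsFan

variable {x : V} {y : ℕ → V} {m : ℕ}

theorem mono (h : IsFan G ℓ x y m) {n : ℕ} (hn : n ≤ m) : IsFan G ℓ x y n where
  injOn := h.injOn.mono (Set.Iic_subset_Iic.2 hn)
  adj r hr := h.adj r (by omega)
  color_ne_zero r hr := h.color_ne_zero r (by omega)
  isMissingAt r hr := h.isMissingAt r (by omega)

theorem ne (h : IsFan G ℓ x y m) {r t : ℕ} (hrt : r ≠ t) (hr : r ≤ m) (ht : t ≤ m) :
    y r ≠ y t :=
  (h.injOn.ne_iff hr ht).2 hrt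

theorem lt_card [Fintype V] (h : IsFan G ℓ x y m) : m < Fintype.card V := by
  have := Finset.card_le_card_of_injOn y (s := Finset.Iic m) (t := Finset.univ)
    (fun _ _ => Finset.mem_univ _) (by simpa using h.injOn)
  simpa using this

theorem sup_edge_adj (h : IsFan G ℓ x y m) (hx : x ≠ y 0) {r : ℕ} (hr : r ≤ m) :
    (G ⊔ edge x (y 0)).Adj x (y r) := by
  rcases r with _ | r
  · exact Or.inr ((edge_adj ..).2 ⟨Or.inl ⟨rfl, rfl⟩, hx⟩)
  · exact Or.inl (h.adj r (by omega))

theorem eq_of_color_eq (hℓ : IsProperLabeling G c ℓ) (h : IsFan G ℓ x y m) {r t : ℕ}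
    (hr : r < m) (ht : t < m) (hrt : ℓ s(x, y (r + 1)) = ℓ s(x, y (t + 1))) : r = t := by
  have := h.injOn (Set.mem_Iic.2 hr) (Set.mem_Iic.2 ht)
    (hℓ.eq_of_color_eq (h.adj r hr) (h.adj t ht) (h.color_ne_zero r hr) hrt)
  omega

theorem extend (h : IsFan G ℓ x y m) {z : V} (hz : G.Adj x z) (hzy : ∀ j ≤ m, y j ≠ z)
    (h0 : ℓ s(x, z) ≠ 0) (hmissing : IsMissingAt G ℓ (y m) (ℓ s(x, z))) :
    IsFan G ℓ x (Function.update y (m + 1) z) (m + 1) := by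
  have hy : ∀ r ≤ m, Function.update y (m + 1) z r = y r :=
    fun r hr => Function.update_of_ne (by omega) _ _
  refine ⟨fun a ha b hb hab => ?_, fun r hr => ?_, fun r hr => ?_, fun r hr => ?_⟩
  · rw [Set.mem_Iic] at ha hb
    rcases eq_or_lt_of_le ha with rfl | ha <;> rcases eq_or_lt_of_le hb with rfl | hb
    · rfl
    · rw [Function.update_self, hy b (by omega)] at hab
      exact absurd hab.symm (hzy b (by omega))
    · rw [Function.update_self, hy a (by omega)] at hab
      exact absurd hab (hzy a (by omega))
    · rw [hy a (by omega), hy b (by omega)] at hab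
      exact h.injOn (Set.mem_Iic.2 (by omega)) (Set.mem_Iic.2 (by omega)) hab
  all_goals rcases Nat.lt_succ_iff_lt_or_eq.1 hr with hr | rfl
  · rw [hy (r + 1) hr]
    exact h.adj r hr
  · rwa [Function.update_self]
  · rw [hy (r + 1) hr]
    exact h.color_ne_zero r hr
  · rwa [Function.update_self]
  · rw [hy (r + 1) hr, hy r hr.le]
    exact h.isMissingAt r hr
  · rwa [Function.update_self, hy r le_rfl]

theorem update [DecidableEq V] {n : ℕ} (h : IsFan G ℓ x y (n + 1)) {γ : ℕ}
    (hγ : IsMissingAt G ℓ x γ) : IsFan G (Function.update ℓ s(x, y (n + 1)) γ) x y n := by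
  have hlabel : ∀ r < n,
      Function.update ℓ s(x, y (n + 1)) γ s(x, y (r + 1)) = ℓ s(x, y (r + 1)) := fun r hr =>
    Function.update_of_ne (mt Sym2.congr_right.1 (h.ne (by omega) (by omega) le_rfl)) _ _
  refine ⟨h.injOn.mono (Set.Iic_subset_Iic.2 n.le_succ), fun r hr => h.adj r (by omega),
    fun r hr => ?_, fun r hr => ?_⟩
  · rw [hlabel r hr]
    exact h.color_ne_zero r (by omega)
  · rw [hlabel r hr]
    exact (h.isMissingAt r (by omega)).update (hγ _ (h.adj r (by omega))).symm _

theorem exists_proper_sup_edge [DecidableEq V] (hℓ : IsProperLabeling G c ℓ)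
    (h : IsFan G ℓ x y m) (hx : ¬G.Adj x (y 0)) {γ : ℕ} (hγ0 : γ ≠ 0) (hγc : γ ≤ c)
    (hγx : IsMissingAt G ℓ x γ) (hγy : IsMissingAt G ℓ (y m) γ) :
    ∃ ℓ', IsProperLabeling (G ⊔ edge x (y 0)) c ℓ' ∧
      weakEdges (G ⊔ edge x (y 0)) ℓ' = weakEdges G ℓ := by
  induction m generalizing ℓ γ with
  | zero =>
    exact ⟨_, hℓ.update_sup_edge hγc hγx hγy, weakEdges_update_sup_edge hγ0 (absurd · hx)⟩
  | succ n ih =>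
    have hadj := h.adj n n.lt_succ_self
    have hδ0 := h.color_ne_zero n n.lt_succ_self
    have hγδ : γ ≠ ℓ s(x, y (n + 1)) := (hγx _ hadj).symm
    have hℓ₁ := hℓ.update_sup_edge hγc hγx hγy
    have hweak := weakEdges_update_sup_edge (G := G) hγ0 (fun _ => hδ0)
    rw [sup_edge_of_adj _ hadj] at hℓ₁ hweak
    obtain ⟨ℓ', hℓ', hweak'⟩ := ih hℓ₁ (h.update hγx) hδ0 (hℓ.le hadj)
      (hℓ.isMissingAt_update hadj hδ0 hγδ) ((h.isMissingAt n n.lt_succ_self).update hγδ _)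
    exact ⟨ℓ', hℓ', hweak'.trans hweak⟩

end IsFan

def kempeGraph (G : SimpleGraph V) (ℓ : Sym2 V → ℕ) (α β : ℕ) : SimpleGraph V where
  Adj a b := G.Adj a b ∧ (ℓ s(a, b) = α ∨ ℓ s(a, b) = β)
  symm := ⟨fun _ _ h => ⟨h.1.symm, Sym2.eq_swap ▸ h.2⟩⟩
  loopless := ⟨fun _ h => G.irrefl h.1⟩

theorem kempeGraph_adj {α β : ℕ} {a b : V} :
    (kempeGraph G ℓ α β).Adj a b ↔ G.Adj a b ∧ (ℓ s(a, b) = α ∨ ℓ s(a, b) = β) :=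
  Iff.rfl

/-- An edge of colour `α` or `β` meeting the chain of `z` lies on it, and the swap fixes all
other colours, so this interchanges `α` and `β` on that chain and nowhere else. -/
noncomputable def kempeSwap (G : SimpleGraph V) (ℓ : Sym2 V → ℕ) (α β : ℕ) (z : V)
    (e : Sym2 V) : ℕ :=
  open Classical in
  if ∃ w ∈ e, (kempeGraph G ℓ α β).Reachable z w then Equiv.swap α β (ℓ e) else ℓ e

theorem swap_apply_eq_zero_iff {α β n : ℕ} (hα : α ≠ 0) (hβ : β ≠ 0) :
    Equiv.swap α β n = 0 ↔ n = 0 := by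
  rw [Equiv.swap_apply_eq_iff, Equiv.swap_apply_of_ne_of_ne hα.symm hβ.symm]

section Kempe

variable {α β : ℕ} {z a b w : V}

theorem kempeSwap_of_reachable (h : (kempeGraph G ℓ α β).Reachable z a) :
    kempeSwap G ℓ α β z s(a, b) = Equiv.swap α β (ℓ s(a, b)) :=
  if_pos ⟨a, Sym2.mem_mk_left a b, h⟩

theorem kempeSwap_of_not_reachable (h : ¬(kempeGraph G ℓ α β).Reachable z a)
    (hab : G.Adj a b) : kempeSwap G ℓ α β z s(a, b) = ℓ s(a, b) := by
  by_cases hb : (kempeGraph G ℓ α β).Reachable z b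
  · have hne : ¬(ℓ s(a, b) = α ∨ ℓ s(a, b) = β) := fun hc =>
      h (hb.trans (kempeGraph_adj.2 ⟨hab.symm, Sym2.eq_swap ▸ hc⟩).reachable)
    rw [not_or] at hne
    rw [Sym2.eq_swap, kempeSwap_of_reachable hb, Sym2.eq_swap,
      Equiv.swap_apply_of_ne_of_ne hne.1 hne.2]
  · refine if_neg ?_
    rintro ⟨w, hw, hr⟩
    rcases Sym2.mem_iff.1 hw with rfl | rfl
    exacts [h hr, hb hr]

theorem weakEdges_kempeSwap (hα : α ≠ 0) (hβ : β ≠ 0) :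
    weakEdges G (kempeSwap G ℓ α β z) = weakEdges G ℓ := by
  ext e
  have : kempeSwap G ℓ α β z e = 0 ↔ ℓ e = 0 := by
    unfold kempeSwap
    split_ifs
    exacts [swap_apply_eq_zero_iff hα hβ, Iff.rfl]
  simp only [weakEdges, Set.mem_ofPred_eq, this]

theorem IsProperLabeling.kempeSwap (hℓ : IsProperLabeling G c ℓ) (hα : α ≠ 0) (hβ : β ≠ 0)
    (hαc : α ≤ c) (hβc : β ≤ c) : IsProperLabeling G c (kempeSwap G ℓ α β z) := by
  rw [isProperLabeling_iff]
  refine ⟨fun a b hab => ?_, fun w a b ha hb h0 hab => ?_⟩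
  · by_cases ha : (kempeGraph G ℓ α β).Reachable z a
    · rw [kempeSwap_of_reachable ha, Equiv.swap_apply_def]
      have := hℓ.le hab
      split_ifs <;> assumption
    · rw [kempeSwap_of_not_reachable ha hab]
      exact hℓ.le hab
  · by_cases hw : (kempeGraph G ℓ α β).Reachable z w
    · rw [kempeSwap_of_reachable hw, kempeSwap_of_reachable hw] at hab
      rw [kempeSwap_of_reachable hw, Ne, swap_apply_eq_zero_iff hα hβ] at h0
      exact hℓ.eq_of_color_eq ha hb h0 ((Equiv.swap α β).injective hab)
    · rw [kempeSwap_of_not_reachable hw ha, kempeSwap_of_not_reachable hw hb] at hab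
      rw [kempeSwap_of_not_reachable hw ha] at h0
      exact hℓ.eq_of_color_eq ha hb h0 hab

theorem isMissingAt_kempeSwap_of_reachable (hw : (kempeGraph G ℓ α β).Reachable z w)
    {δ : ℕ} : IsMissingAt G (kempeSwap G ℓ α β z) w δ ↔ IsMissingAt G ℓ w (Equiv.swap α β δ) :=
  forall₂_congr fun _ _ => by rw [kempeSwap_of_reachable hw, Ne, Ne, Equiv.swap_apply_eq_iff]

theorem isMissingAt_kempeSwap_of_not_reachable (hw : ¬(kempeGraph G ℓ α β).Reachable z w)
    {δ : ℕ} : IsMissingAt G (kempeSwap G ℓ α β z) w δ ↔ IsMissingAt G ℓ w δ :=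
  forall₂_congr fun _ hq => by rw [kempeSwap_of_not_reachable hw hq]

theorem isMissingAt_kempeSwap_of_ne {δ : ℕ} (hα : δ ≠ α) (hβ : δ ≠ β) :
    IsMissingAt G (kempeSwap G ℓ α β z) w δ ↔ IsMissingAt G ℓ w δ := by
  by_cases hw : (kempeGraph G ℓ α β).Reachable z w
  · rw [isMissingAt_kempeSwap_of_reachable hw, Equiv.swap_apply_of_ne_of_ne hα hβ]
  · exact isMissingAt_kempeSwap_of_not_reachable hw

variable [Fintype V] [DecidableRel (kempeGraph G ℓ α β).Adj]

theorem IsProperLabeling.degree_kempeGraph_le (hℓ : IsProperLabeling G c ℓ) (hα : α ≠ 0)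
    (hβ : β ≠ 0) {T : Finset ℕ} (hT : ∀ z, (kempeGraph G ℓ α β).Adj w z → ℓ s(w, z) ∈ T) :
    (kempeGraph G ℓ α β).degree w ≤ #T := by
  rw [← card_neighborFinset_eq_degree]
  refine Finset.card_le_card_of_injOn (fun z => ℓ s(w, z))
    (fun z hz => hT z ((mem_neighborFinset _ _ _).1 hz)) fun a ha b hb hab => ?_
  obtain ⟨ha, hαβ⟩ := (mem_neighborFinset _ _ _).1 ha
  obtain ⟨hb, -⟩ := (mem_neighborFinset _ _ _).1 hb
  exact hℓ.eq_of_color_eq ha hb (by rcases hαβ with h | h <;> rw [h] <;> assumption) hab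

theorem IsProperLabeling.degree_kempeGraph_le_two (hℓ : IsProperLabeling G c ℓ) (hα : α ≠ 0)
    (hβ : β ≠ 0) : (kempeGraph G ℓ α β).degree w ≤ 2 :=
  (hℓ.degree_kempeGraph_le hα hβ (T := {α, β}) fun _ hz => by simpa using hz.2).trans
    Finset.card_le_two

theorem IsProperLabeling.degree_kempeGraph_lt_two (hℓ : IsProperLabeling G c ℓ) (hα : α ≠ 0)
    (hβ : β ≠ 0) (hw : IsMissingAt G ℓ w α ∨ IsMissingAt G ℓ w β) :
    (kempeGraph G ℓ α β).degree w < 2 := by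
  rcases hw with hw | hw
  · exact Nat.lt_succ_of_le (hℓ.degree_kempeGraph_le hα hβ (T := {β}) fun z hz => by
      simpa using hz.2.resolve_left (hw z hz.1))
  · exact Nat.lt_succ_of_le (hℓ.degree_kempeGraph_le hα hβ (T := {α}) fun z hz => by
      simpa using hz.2.resolve_right (hw z hz.1))

end Kempe

namespace IsFan

variable {x : V} {y : ℕ → V} {m : ℕ} {α β : ℕ}

theorem kempeSwap (h : IsFan G ℓ x y m) {z : V} (hx : ¬(kempeGraph G ℓ α β).Reachable z x)
    (hαx : IsMissingAt G ℓ x α)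
    (hβ : ∀ r < m, ℓ s(x, y (r + 1)) = β → ¬(kempeGraph G ℓ α β).Reachable z (y r)) :
    IsFan G (kempeSwap G ℓ α β z) x y m := by
  have hcolor : ∀ r < m, _root_.kempeSwap G ℓ α β z s(x, y (r + 1)) = ℓ s(x, y (r + 1)) :=
    fun r hr => kempeSwap_of_not_reachable hx (h.adj r hr)
  refine ⟨h.injOn, h.adj, fun r hr => hcolor r hr ▸ h.color_ne_zero r hr, fun r hr => ?_⟩
  rw [hcolor r hr]
  by_cases hβr : ℓ s(x, y (r + 1)) = β
  · exact (isMissingAt_kempeSwap_of_not_reachable (hβ r hr hβr)).2 (h.isMissingAt r hr)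
  · exact (isMissingAt_kempeSwap_of_ne (hαx _ (h.adj r hr)) hβr).2 (h.isMissingAt r hr)

theorem exists_proper_sup_edge_of_kempeSwap [DecidableEq V] (hℓ : IsProperLabeling G c ℓ)
    (h : IsFan G ℓ x y m) (hx : ¬G.Adj x (y 0)) (hα0 : α ≠ 0) (hαc : α ≤ c) (hβ0 : β ≠ 0)
    (hβc : β ≤ c) (hαx : IsMissingAt G ℓ x α) (hβy : IsMissingAt G ℓ (y m) β)
    (hreach : ¬(kempeGraph G ℓ α β).Reachable (y m) x)
    (hβ : ∀ r < m, ℓ s(x, y (r + 1)) = β → ¬(kempeGraph G ℓ α β).Reachable (y m) (y r)) :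
    ∃ ℓ', IsProperLabeling (G ⊔ edge x (y 0)) c ℓ' ∧
      weakEdges (G ⊔ edge x (y 0)) ℓ' = weakEdges G ℓ := by
  have hαy : IsMissingAt G (_root_.kempeSwap G ℓ α β (y m)) (y m) α := by
    rwa [isMissingAt_kempeSwap_of_reachable .rfl, Equiv.swap_apply_left]
  obtain ⟨ℓ', hℓ', hweak⟩ := (h.kempeSwap hreach hαx hβ).exists_proper_sup_edge
    (hℓ.kempeSwap hα0 hβ0 hαc hβc) hx hα0 hαc
    ((isMissingAt_kempeSwap_of_not_reachable hreach).2 hαx) hαy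
  exact ⟨ℓ', hℓ', hweak.trans (weakEdges_kempeSwap hα0 hβ0)⟩

theorem exists_proper_sup_edge_of_color_eq [Fintype V] [DecidableEq V]
    (hℓ : IsProperLabeling G c ℓ) (h : IsFan G ℓ x y m) (hx : ¬G.Adj x (y 0)) (hx0 : x ≠ y 0)
    (hα0 : α ≠ 0) (hαc : α ≤ c) (hβ0 : β ≠ 0) (hβc : β ≤ c) (hαx : IsMissingAt G ℓ x α)
    (hβy : IsMissingAt G ℓ (y m) β) {j : ℕ} (hj : j ≤ m) (hxj : G.Adj x (y j))
    (hβj : ℓ s(x, y j) = β) :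
    ∃ ℓ', IsProperLabeling (G ⊔ edge x (y 0)) c ℓ' ∧
      weakEdges (G ⊔ edge x (y 0)) ℓ' = weakEdges G ℓ := by
  classical
  obtain ⟨i, rfl⟩ : ∃ i, j = i + 1 :=
    Nat.exists_eq_add_one.2 (Nat.pos_of_ne_zero (by rintro rfl; exact hx hxj))
  set K := kempeGraph G ℓ α β
  have hβi : IsMissingAt G ℓ (y i) β := hβj ▸ h.isMissingAt i (by omega)
  have hβ_only : ∀ r < m, ℓ s(x, y (r + 1)) = β → r = i :=
    fun r hr hr' => h.eq_of_color_eq hℓ hr (by omega) (hr'.trans hβj.symm)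
  by_cases hxi : K.Reachable (y i) x
  · by_cases hmi : K.Reachable (y i) (y m)
    · have hyx : ∀ r ≤ m, y r ≠ x := fun r hr => (h.sup_edge_adj hx0 hr).ne.symm
      exact absurd hmi <| hxi.not_reachable_of_degree_lt_two
        (fun _ => hℓ.degree_kempeGraph_le_two hα0 hβ0) (hyx i (by omega))
        (h.ne (by omega) (by omega) le_rfl) (hyx m le_rfl).symm
        (hℓ.degree_kempeGraph_lt_two hα0 hβ0 (.inr hβi))
        (hℓ.degree_kempeGraph_lt_two hα0 hβ0 (.inl hαx))
        (hℓ.degree_kempeGraph_lt_two hα0 hβ0 (.inr hβy))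
    · exact h.exists_proper_sup_edge_of_kempeSwap hℓ hx hα0 hαc hβ0 hβc hαx hβy
        (fun hmx => hmi (hxi.trans hmx.symm))
        (fun r hr hr' => hβ_only r hr hr' ▸ fun h' => hmi h'.symm)
  · exact (h.mono (by omega)).exists_proper_sup_edge_of_kempeSwap hℓ hx hα0 hαc hβ0 hβc hαx
      hβi hxi fun r hr hr' => absurd (hβ_only r (by omega) hr') (by omega)

theorem exists_proper_sup_edge_of_degree_lt [Fintype V] [DecidableEq V] [DecidableRel G.Adj]
    {y : ℕ → V} {m : ℕ} (hℓ : IsProperLabeling G c ℓ) (h : IsFan G ℓ x y m)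
    (hx : ¬G.Adj x (y 0)) (hx0 : x ≠ y 0)
    (hdeg : ∀ w ∈ insert x ((G ⊔ edge x (y 0)).neighborSet x), G.degree w < c) :
    ∃ ℓ', IsProperLabeling (G ⊔ edge x (y 0)) c ℓ' ∧
      weakEdges (G ⊔ edge x (y 0)) ℓ' = weakEdges G ℓ := by
  obtain ⟨β, hβ0, hβc, hβy⟩ := exists_isMissingAt_of_degree_lt (ℓ := ℓ)
    (hdeg (y m) (Set.mem_insert_of_mem _ (h.sup_edge_adj hx0 le_rfl)))
  by_cases hβx : IsMissingAt G ℓ x β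
  · exact h.exists_proper_sup_edge hℓ hx hβ0 hβc hβx hβy
  obtain ⟨z, hxz, hβz⟩ : ∃ z, G.Adj x z ∧ ℓ s(x, z) = β := by simpa [IsMissingAt] using hβx
  by_cases hzy : ∃ j ≤ m, y j = z
  · obtain ⟨j, hj, rfl⟩ := hzy
    obtain ⟨α, hα0, hαc, hαx⟩ := exists_isMissingAt_of_degree_lt (ℓ := ℓ)
      (hdeg x (Set.mem_insert _ _))
    exact h.exists_proper_sup_edge_of_color_eq hℓ hx hx0 hα0 hαc hβ0 hβc hαx hβy hj hxz hβz
  · push Not at hzy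
    have hext := h.extend hxz hzy (hβz ▸ hβ0) (hβz ▸ hβy)
    have h0 : Function.update y (m + 1) z 0 = y 0 := Function.update_of_ne (by omega) _ _
    rw [← h0] at hx hx0 hdeg ⊢
    exact hext.exists_proper_sup_edge_of_degree_lt hℓ hx hx0 hdeg
termination_by Fintype.card V - m
decreasing_by
  have := hext.lt_card
  omega

end IsFan

end

/-- If `G` has a proper `c`-colored labeling with exactly `k` weak edges, and a
non-edge `{u,v}` is added such that in the new graph every vertex in the closed
neighborhood of `u` has degree at most `c-1`, then the new graph also has a
proper `c`-colored labeling with exactly `k` weak edges. -/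
theorem add_edge_of_low_degree {V : Type*} [Fintype V] [DecidableEq V]
    (G : SimpleGraph V) (c k : ℕ) (ℓ : Sym2 V → ℕ)
    (hproper : IsProperLabeling G c ℓ) (hweak : weakCount G ℓ = k)
    (u v : V) (huv : u ≠ v) (hne : ¬ G.Adj u v)
    (G' : SimpleGraph V) (hG' : G' = G ⊔ SimpleGraph.fromEdgeSet {s(u, v)})
    (hdeg : ∀ w ∈ insert u (G'.neighborSet u), (G'.neighborSet w).ncard ≤ c - 1) :
    ∃ ℓ' : Sym2 V → ℕ, IsProperLabeling G' c ℓ' ∧ weakCount G' ℓ' = k := by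
  classical
  obtain rfl : G' = G ⊔ edge u v := hG'
  have hfan : IsFan G ℓ u (fun _ => v) 0 := isFan_zero u _
  -- `u` has the neighbour `v`, so `c - 1` is not a truncated `0`
  have hc : 0 < c - 1 := ((Set.ncard_pos (Set.toFinite _)).2
    ⟨v, hfan.sup_edge_adj huv le_rfl⟩).trans_le (hdeg u (Set.mem_insert _ _))
  have hdeg' : ∀ w ∈ insert u ((G ⊔ edge u v).neighborSet u), G.degree w < c := fun w hw => by
    have hle : G.degree w ≤ ((G ⊔ edge u v).neighborSet w).ncard := by
      rw [← card_neighborSet_eq_degree, ← Nat.card_eq_fintype_card, Nat.card_coe_set_eq]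
      exact Set.ncard_le_ncard (neighborSet_mono le_sup_left w) (Set.toFinite _)
    have := hdeg w hw
    omega
  obtain ⟨ℓ', hℓ', hweak'⟩ := hfan.exists_proper_sup_edge_of_degree_lt hproper hne huv hdeg'
  exact ⟨ℓ', hℓ', hweak ▸ congrArg Set.ncard hweak'⟩
end

section
/- Let G=(V,E) be a graph with an edge e={u,v}, let c = Δ(G), and suppose L is a proper c-colored labeling of (V, E\{e}) with no weak edges. If for every subset Z ⊆ N_G(u) with |Z| ≥ 2 and v ∈ Z it holds that Σ_{z∈Z}(deg_G(z)+1-c) < 2, then there is a proper c-colored labeling of G with no weak edges. -/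
open SimpleGraph

/-!
Suppose `G` has no proper `c`-edge-colouring, and grow Vizing fans at `u` from `v` for the
colouring of `G - uv`: each new fan vertex `y` is a neighbour of `u` such that the colour of `uy`
is missing at the previous fan vertex. If a fan vertex misses a colour that is also missing at
`u`, shifting colours down the fan extends the colouring to `uv`. If two fan vertices miss a
common colour `α`, then, with `β` missing at `u`, the `α/β` Kempe path through `u` avoids one of
them, and a Kempe change on the component of that vertex reduces to the first case. Hence, on the
set `Z` of all fan vertices, the missing colours are pairwise distinct and each labels an edge
from `u` to a vertex of `Z \ {v}`; since `z` misses at least `c - deg z + [z = v]` colours in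
`G - uv`, this gives `∑_{z ∈ Z} (deg z + 1 - c) ≥ 2`, and also `|Z| ≥ 2` as every summand is at
most `1`.
-/

open Finset

theorem Finset.sum_card_le_card_sub_one {ι κ : Type*} [DecidableEq ι] [DecidableEq κ]
    {Z : Finset ι} {M : ι → Finset κ} {f : ι → κ} {v : ι} (hv : v ∈ Z)
    (hM : (Z : Set ι).PairwiseDisjoint M) (hf : ∀ z ∈ Z, M z ⊆ (Z.erase v).image f) :
    ∑ z ∈ Z, #(M z) ≤ #Z - 1 := by
  rw [← card_biUnion hM, ← card_erase_of_mem hv]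
  exact (card_le_card (biUnion_subset.2 hf)).trans card_image_le

namespace SimpleGraph

variable {V : Type*}

section Path

variable {H : SimpleGraph V}

namespace Walk

variable {a b : V} {p : H.Walk a b}

theorem adj_getVert_sub_one {i : ℕ} (hi : 0 < i) (hil : i ≤ p.length) :
    H.Adj (p.getVert i) (p.getVert (i - 1)) := by
  simpa [Nat.sub_add_cancel hi] using (p.adj_getVert_succ (i := i - 1) (by omega)).symm

theorem IsPath.getVert_sub_one_ne_add_one (hp : p.IsPath) {i : ℕ} (hil : i < p.length) :
    p.getVert (i - 1) ≠ p.getVert (i + 1) := fun h => by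
  have := hp.getVert_injOn (by simp only [Set.mem_ofPred_eq]; omega)
    (by simp only [Set.mem_ofPred_eq]; omega) h
  omega

theorem IsPath.mem_support_of_adj (hp : p.IsPath) (hab : a ≠ b)
    (hdeg : ∀ ⦃z x y₁ y₂⦄, H.Adj z x → H.Adj z y₁ → H.Adj z y₂ → y₁ ≠ y₂ → x = y₁ ∨ x = y₂)
    (ha : (H.neighborSet a).Subsingleton) (hb : (H.neighborSet b).Subsingleton)
    {z x : V} (hz : z ∈ p.support) (hzx : H.Adj z x) : x ∈ p.support := by
  obtain ⟨i, rfl, hil⟩ := mem_support_iff_exists_getVert.1 hz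
  have hl : 0 < p.length := Nat.pos_of_ne_zero fun h => hab (eq_of_length_eq_zero h)
  rcases Nat.eq_zero_or_pos i with rfl | hi
  · rw [getVert_zero] at hzx
    have hnext := p.adj_getVert_succ hl
    rw [getVert_zero] at hnext
    exact ha hzx hnext ▸ getVert_mem_support _ _
  rcases hil.lt_or_eq with hil | rfl
  · rcases hdeg hzx (adj_getVert_sub_one hi hil.le) (p.adj_getVert_succ hil)
      (hp.getVert_sub_one_ne_add_one hil) with rfl | rfl <;> exact getVert_mem_support _ _
  · have hprev := adj_getVert_sub_one (p := p) hi le_rfl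
    rw [getVert_length] at hzx hprev
    exact hb hzx hprev ▸ getVert_mem_support _ _

end Walk

theorem Reachable.not_reachable_of_subsingleton_neighborSet {a b₁ b₂ : V}
    (hdeg : ∀ ⦃z x y₁ y₂⦄, H.Adj z x → H.Adj z y₁ → H.Adj z y₂ → y₁ ≠ y₂ → x = y₁ ∨ x = y₂)
    (ha : (H.neighborSet a).Subsingleton) (hb₁ : (H.neighborSet b₁).Subsingleton)
    (hb₂ : (H.neighborSet b₂).Subsingleton) (hab₁ : a ≠ b₁) (hab₂ : a ≠ b₂) (hb : b₁ ≠ b₂)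
    (h₁ : H.Reachable a b₁) : ¬H.Reachable a b₂ := by
  classical
  rintro ⟨r⟩
  obtain ⟨p, hp⟩ := h₁.some.toPath
  have hclosed : ∀ {s t : V} (w : H.Walk s t), s ∈ p.support → t ∈ p.support := by
    intro s t w
    induction w with
    | nil => exact id
    | cons hadj _ ih => exact fun hs => ih (hp.mem_support_of_adj hab₁ hdeg ha hb₁ hs hadj)
  obtain ⟨i, rfl, hil⟩ := Walk.mem_support_iff_exists_getVert.1 (hclosed r p.start_mem_support)
  have hi : 0 < i := Nat.pos_of_ne_zero fun h => hab₂ (by rw [h, Walk.getVert_zero])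
  have hil : i < p.length := hil.lt_of_ne fun h => hb (by rw [h, Walk.getVert_length])
  exact hp.getVert_sub_one_ne_add_one hil
    (hb₂ (Walk.adj_getVert_sub_one hi hil.le) (p.adj_getVert_succ hil))

end Path

variable {G H : SimpleGraph V} {c : ℕ} {m m' : Sym2 V → ℕ}

structure IsEdgeColoring (H : SimpleGraph V) (c : ℕ) (m : Sym2 V → ℕ) : Prop where
  mem_Icc ⦃x y : V⦄ : H.Adj x y → m s(x, y) ∈ Set.Icc 1 c
  inj ⦃x y z : V⦄ : H.Adj x y → H.Adj x z → m s(x, y) = m s(x, z) → y = z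

def IsMissingColor (H : SimpleGraph V) (c : ℕ) (m : Sym2 V → ℕ) (x : V) (a : ℕ) : Prop :=
  a ∈ Set.Icc 1 c ∧ ∀ ⦃y⦄, H.Adj x y → m s(x, y) ≠ a

theorem weakCount_eq_zero_iff [Finite V] {ℓ : Sym2 V → ℕ} :
    weakCount H ℓ = 0 ↔ ∀ e ∈ H.edgeSet, ℓ e ≠ 0 := by
  simp [weakCount, Set.ncard_eq_zero (Set.toFinite _), Set.eq_empty_iff_forall_notMem]

theorem isEdgeColoring_iff [Finite V] {ℓ : Sym2 V → ℕ} :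
    IsEdgeColoring H c ℓ ↔ IsProperLabeling H c ℓ ∧ weakCount H ℓ = 0 := by
  rw [weakCount_eq_zero_iff]
  constructor
  · intro hℓ
    have hpos : ∀ e ∈ H.edgeSet, ℓ e ≠ 0 := by
      rintro ⟨x, y⟩ hxy
      exact (Nat.one_le_iff_ne_zero.1 (hℓ.mem_Icc hxy).1)
    refine ⟨⟨?_, ?_⟩, hpos⟩
    · rintro ⟨x, y⟩ hxy
      exact (hℓ.mem_Icc hxy).2
    · rintro e₁ he₁ e₂ he₂ hne ⟨x, hx₁, hx₂⟩ heq
      obtain ⟨y, rfl⟩ := Sym2.mem_iff_exists.1 hx₁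
      obtain ⟨z, rfl⟩ := Sym2.mem_iff_exists.1 hx₂
      exact absurd (congrArg _ (hℓ.inj he₁ he₂ heq)) hne
  · rintro ⟨⟨hle, hinj⟩, hpos⟩
    refine ⟨fun x y hxy => ⟨Nat.one_le_iff_ne_zero.2 (hpos _ hxy), hle _ hxy⟩, ?_⟩
    intro x y z hxy hxz heq
    by_contra hyz
    exact hpos _ hxy (hinj _ hxy _ hxz (fun h => hyz (Sym2.congr_right.1 h))
      ⟨x, Sym2.mem_mk_left _ _, Sym2.mem_mk_left _ _⟩ heq)

theorem IsMissingColor.congr {x : V} {a : ℕ} (ha : IsMissingColor H c m x a)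
    (h : ∀ y, m' s(x, y) = m s(x, y)) : IsMissingColor H c m' x a :=
  ⟨ha.1, fun y hxy => h y ▸ ha.2 hxy⟩

theorem IsEdgeColoring.update [DecidableEq V] (hm : IsEdgeColoring H c m) {a b : V} {β : ℕ}
    (hGH : ∀ ⦃x y⦄, G.Adj x y → s(x, y) ≠ s(a, b) → H.Adj x y)
    (ha : IsMissingColor H c m a β) (hb : IsMissingColor H c m b β) :
    IsEdgeColoring G c (Function.update m s(a, b) β) := by
  have hother : ∀ ⦃x y z⦄, G.Adj x z → s(x, y) = s(a, b) → s(x, z) ≠ s(a, b) →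
      Function.update m s(a, b) β s(x, z) ≠ β := by
    intro x y z hxz hxy hne
    rw [Function.update_of_ne hne]
    rcases Sym2.eq_iff.1 hxy with ⟨rfl, -⟩ | ⟨rfl, -⟩
    exacts [ha.2 (hGH hxz hne), hb.2 (hGH hxz hne)]
  constructor
  · intro x y hxy
    by_cases h : s(x, y) = s(a, b)
    · rw [h, Function.update_self]; exact ha.1
    · rw [Function.update_of_ne h]; exact hm.mem_Icc (hGH hxy h)
  · intro x y z hxy hxz heq
    by_cases hy : s(x, y) = s(a, b) <;> by_cases hz : s(x, z) = s(a, b)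
    · exact Sym2.congr_right.1 (hy.trans hz.symm)
    · rw [hy, Function.update_self] at heq; exact absurd heq.symm (hother hxz hy hz)
    · rw [hz, Function.update_self] at heq; exact absurd heq (hother hxy hz hy)
    · rw [Function.update_of_ne hy, Function.update_of_ne hz] at heq
      exact hm.inj (hGH hxy hy) (hGH hxz hz) heq

/-- `IsFan H c m u v y L`: a Vizing fan `v = y₀, y₁, …, yₖ = y` at `u`, where `L` lists
`yₖ₋₁, …, y₀` (most recent first). -/
inductive IsFan (H : SimpleGraph V) (c : ℕ) (m : Sym2 V → ℕ) (u v : V) : V → List V → Prop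
  | base : IsFan H c m u v v []
  | step {x : V} {L : List V} {y : V} : IsFan H c m u v x L → H.Adj u y → y ∉ x :: L →
      IsMissingColor H c m x (m s(u, y)) → IsFan H c m u v y (x :: L)

namespace IsFan

variable {u v y : V} {L : List V}

theorem eq_or_adj_of_mem (hf : IsFan H c m u v y L) {z : V} (hz : z ∈ y :: L) :
    z = v ∨ H.Adj u z := by
  induction hf with
  | base => exact .inl (List.mem_singleton.1 hz)
  | step _ hadj _ _ ih =>
    rcases List.mem_cons.1 hz with rfl | hz
    exacts [.inr hadj, ih hz]

theorem exists_of_mem (hf : IsFan H c m u v y L) {z : V} (hz : z ∈ y :: L) :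
    ∃ L', IsFan H c m u v z L' := by
  induction hf with
  | base => exact ⟨[], List.mem_singleton.1 hz ▸ base⟩
  | step hf hadj hy hmiss ih =>
    rcases List.mem_cons.1 hz with rfl | hz
    exacts [⟨_, step hf hadj hy hmiss⟩, ih hz]

theorem congr (hf : IsFan H c m u v y L) (h : ∀ z ∈ y :: L, ∀ w, m' s(z, w) = m s(z, w)) :
    IsFan H c m' u v y L := by
  induction hf with
  | base => exact base
  | @step x L y hf hadj hy hmiss ih =>
    refine step (ih fun z hz => h z (List.mem_cons_of_mem _ hz)) hadj hy ?_
    rw [Sym2.eq_swap, h y List.mem_cons_self, Sym2.eq_swap]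
    exact hmiss.congr (h x (List.mem_cons_of_mem _ List.mem_cons_self))

end IsFan

/-- Recolouring `uy` by `β` frees the old colour of `uy` at `u`, and that colour is missing at the
predecessor of `y`. -/
theorem IsFan.exists_isEdgeColoring [DecidableEq V] {u v y : V} {L : List V} {β : ℕ}
    (huv : G.Adj u v) (hm : IsEdgeColoring (G.deleteEdges {s(u, v)}) c m)
    (hf : IsFan (G.deleteEdges {s(u, v)}) c m u v y L)
    (hu : IsMissingColor (G.deleteEdges {s(u, v)}) c m u β)
    (hβy : IsMissingColor (G.deleteEdges {s(u, v)}) c m y β) : ∃ m', IsEdgeColoring G c m' := by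
  induction L generalizing m y β with
  | nil =>
    cases hf
    refine ⟨_, hm.update (fun x y hxy hne => ?_) hu hβy⟩
    exact deleteEdges_adj.2 ⟨hxy, hne⟩
  | cons x L ih =>
    obtain _ | ⟨hf, hadj, hy, hmiss⟩ := hf
    have hfan_ne : ∀ z ∈ x :: L, z ≠ u ∧ z ≠ y := fun z hz =>
      ⟨(hf.eq_or_adj_of_mem hz).elim (· ▸ huv.ne') (·.ne'), fun h => hy (h ▸ hz)⟩
    have hagree : ∀ z ∈ x :: L, ∀ w, Function.update m s(u, y) β s(z, w) = m s(z, w) := by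
      intro z hz w
      refine Function.update_of_ne (fun h => ?_) _ _
      rcases Sym2.mem_iff.1 (h ▸ Sym2.mem_mk_left z w) with h | h
      exacts [(hfan_ne z hz).1 h, (hfan_ne z hz).2 h]
    have hγ : IsMissingColor (G.deleteEdges {s(u, v)}) c (Function.update m s(u, y) β) u
        (m s(u, y)) := by
      refine ⟨hm.mem_Icc hadj, fun w huw => ?_⟩
      by_cases hwy : w = y
      · subst hwy; rw [Function.update_self]; exact (hu.2 huw).symm
      · rw [Function.update_of_ne (fun h => hwy (Sym2.congr_right.1 h))]
        exact fun h => hwy (hm.inj huw hadj h)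
    exact ih (hm.update (fun _ _ h _ => h) hu hβy) (hf.congr hagree) hγ
      (hmiss.congr (hagree x List.mem_cons_self))

section Kempe

variable {α β : ℕ}

def kempeGraph (H : SimpleGraph V) (m : Sym2 V → ℕ) (α β : ℕ) : SimpleGraph V where
  Adj x y := H.Adj x y ∧ (m s(x, y) = α ∨ m s(x, y) = β)
  symm.symm x y h := ⟨h.1.symm, by rw [Sym2.eq_swap]; exact h.2⟩
  loopless.irrefl x h := H.irrefl h.1

theorem IsEdgeColoring.eq_or_eq_of_kempeGraph_adj (hm : IsEdgeColoring H c m) ⦃z x y₁ y₂ : V⦄ :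
    (kempeGraph H m α β).Adj z x → (kempeGraph H m α β).Adj z y₁ →
      (kempeGraph H m α β).Adj z y₂ → y₁ ≠ y₂ → x = y₁ ∨ x = y₂ := by
  rintro ⟨hx, _⟩ ⟨hy₁, _⟩ ⟨hy₂, _⟩ hy
  by_contra! h
  have := mt (hm.inj hx hy₁) h.1
  have := mt (hm.inj hx hy₂) h.2
  have := mt (hm.inj hy₁ hy₂) hy
  omega

theorem IsMissingColor.subsingleton_neighborSet_kempeGraph (hm : IsEdgeColoring H c m) {x : V}
    {γ : ℕ} (hx : IsMissingColor H c m x γ) (hγ : γ = α ∨ γ = β) :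
    ((kempeGraph H m α β).neighborSet x).Subsingleton := by
  rintro y ⟨hy, hcy⟩ z ⟨hz, hcz⟩
  have := hx.2 hy
  have := hx.2 hz
  exact hm.inj hy hz (by omega)

open Classical in
/-- On a union of components of `kempeGraph H m α β` this is a Kempe change. -/
noncomputable def kempeSwap (m : Sym2 V → ℕ) (α β : ℕ) (C : Set V) : Sym2 V → ℕ :=
  fun e => if ∃ x ∈ C, x ∈ e then Equiv.swap α β (m e) else m e

variable {C : Set V} {x : V}

theorem kempeSwap_apply_of_mem (hx : x ∈ C) (y : V) :
    kempeSwap m α β C s(x, y) = Equiv.swap α β (m s(x, y)) :=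
  if_pos ⟨x, hx, Sym2.mem_mk_left x y⟩

theorem kempeSwap_apply_of_notMem (hC : ∀ ⦃a b⦄, (kempeGraph H m α β).Adj a b → b ∈ C → a ∈ C)
    (hx : x ∉ C) {y : V} (hxy : H.Adj x y) : kempeSwap m α β C s(x, y) = m s(x, y) := by
  rw [kempeSwap]
  split_ifs with h
  · obtain ⟨z, hz, hzxy⟩ := h
    rcases Sym2.mem_iff.1 hzxy with rfl | rfl
    · exact absurd hz hx
    · refine Equiv.swap_apply_of_ne_of_ne ?_ ?_ <;> intro hcol <;>
        exact hx (hC ⟨hxy, by omega⟩ hz)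
  · rfl

theorem IsEdgeColoring.kempeSwap (hm : IsEdgeColoring H c m) (hα : α ∈ Set.Icc 1 c)
    (hβ : β ∈ Set.Icc 1 c) (hC : ∀ ⦃a b⦄, (kempeGraph H m α β).Adj a b → b ∈ C → a ∈ C) :
    IsEdgeColoring H c (kempeSwap m α β C) := by
  have hlocal : ∀ x, ∃ σ : Equiv.Perm ℕ, (∀ a ∈ Set.Icc 1 c, σ a ∈ Set.Icc 1 c) ∧
      ∀ ⦃y⦄, H.Adj x y → SimpleGraph.kempeSwap m α β C s(x, y) = σ (m s(x, y)) := by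
    intro x
    by_cases hx : x ∈ C
    · refine ⟨Equiv.swap α β, fun a ha => ?_, fun y _ => kempeSwap_apply_of_mem hx y⟩
      rw [Equiv.swap_apply_def]
      split_ifs <;> assumption
    · exact ⟨1, fun a ha => ha, fun y hxy => kempeSwap_apply_of_notMem hC hx hxy⟩
  constructor
  · intro x y hxy
    obtain ⟨σ, hσ, hσm⟩ := hlocal x
    rw [hσm hxy]
    exact hσ _ (hm.mem_Icc hxy)
  · intro x y z hxy hxz heq
    obtain ⟨σ, -, hσm⟩ := hlocal x
    rw [hσm hxy, hσm hxz] at heq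
    exact hm.inj hxy hxz (σ.injective heq)

theorem IsMissingColor.kempeSwap_of_mem {a : ℕ} (hx : IsMissingColor H c m x a) (hxC : x ∈ C)
    (ha : Equiv.swap α β a ∈ Set.Icc 1 c) :
    IsMissingColor H c (kempeSwap m α β C) x (Equiv.swap α β a) :=
  ⟨ha, fun y hxy => by
    rw [kempeSwap_apply_of_mem hxC]
    exact (Equiv.swap α β).injective.ne (hx.2 hxy)⟩

theorem IsMissingColor.kempeSwap_of_notMem {a : ℕ}
    (hC : ∀ ⦃a b⦄, (kempeGraph H m α β).Adj a b → b ∈ C → a ∈ C) (hxC : x ∉ C)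
    (hx : IsMissingColor H c m x a) : IsMissingColor H c (kempeSwap m α β C) x a :=
  ⟨hx.1, fun y hxy => by rw [kempeSwap_apply_of_notMem hC hxC hxy]; exact hx.2 hxy⟩

theorem IsFan.kempeSwap_or_exists {u v y : V} {L : List V}
    (hC : ∀ ⦃a b⦄, (kempeGraph H m α β).Adj a b → b ∈ C → a ∈ C) (hu : u ∉ C)
    (hβ : IsMissingColor H c m u β) (hf : IsFan H c m u v y L) :
    IsFan H c (kempeSwap m α β C) u v y L ∨
      ∃ z ∈ C, (∃ L', IsFan H c (kempeSwap m α β C) u v z L') ∧ IsMissingColor H c m z α := by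
  induction hf with
  | base => exact .inl .base
  | @step x L y hf hadj hy hmiss ih =>
    refine ih.elim (fun hf' => ?_) .inr
    have hcol := kempeSwap_apply_of_notMem hC hu hadj
    by_cases hxC : x ∈ C
    · by_cases hα : m s(u, y) = α
      · exact .inr ⟨x, hxC, ⟨L, hf'⟩, hα ▸ hmiss⟩
      · have hfix := Equiv.swap_apply_of_ne_of_ne hα (hβ.2 hadj)
        have := hmiss.kempeSwap_of_mem hxC (hfix ▸ hmiss.1)
        rw [hfix] at this
        exact .inl (.step hf' hadj hy (hcol ▸ this))
    · exact .inl (.step hf' hadj hy (hcol ▸ hmiss.kempeSwap_of_notMem hC hxC))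

end Kempe

variable {u v : V}

theorem IsFan.center_ne (huv : G.Adj u v) {x : V} {L : List V}
    (hf : IsFan (G.deleteEdges {s(u, v)}) c m u v x L) : u ≠ x :=
  (hf.eq_or_adj_of_mem List.mem_cons_self).elim (· ▸ huv.ne) (·.ne)

theorem IsFan.exists_isEdgeColoring_of_isFan [DecidableEq V] (huv : G.Adj u v) {α β : ℕ}
    {x₁ x₂ : V} {L₁ L₂ : List V} (hm : IsEdgeColoring (G.deleteEdges {s(u, v)}) c m)
    (hβ : IsMissingColor (G.deleteEdges {s(u, v)}) c m u β)
    (h₁ : IsFan (G.deleteEdges {s(u, v)}) c m u v x₁ L₁)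
    (h₂ : IsFan (G.deleteEdges {s(u, v)}) c m u v x₂ L₂) (hx : x₁ ≠ x₂)
    (hα₁ : IsMissingColor (G.deleteEdges {s(u, v)}) c m x₁ α)
    (hα₂ : IsMissingColor (G.deleteEdges {s(u, v)}) c m x₂ α) : ∃ m', IsEdgeColoring G c m' := by
  obtain rfl | hαβ := eq_or_ne α β
  · exact h₁.exists_isEdgeColoring huv hm hβ hα₁
  set K := kempeGraph (G.deleteEdges {s(u, v)}) m α β
  obtain ⟨y, Ly, hy, hαy, hyu⟩ : ∃ y Ly, IsFan (G.deleteEdges {s(u, v)}) c m u v y Ly ∧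
      IsMissingColor (G.deleteEdges {s(u, v)}) c m y α ∧ ¬K.Reachable u y := by
    by_cases h : K.Reachable u x₁
    · refine ⟨x₂, L₂, h₂, hα₂, h.not_reachable_of_subsingleton_neighborSet
        hm.eq_or_eq_of_kempeGraph_adj
        (hβ.subsingleton_neighborSet_kempeGraph hm (.inr rfl))
        (hα₁.subsingleton_neighborSet_kempeGraph hm (.inl rfl))
        (hα₂.subsingleton_neighborSet_kempeGraph hm (.inl rfl))
        (h₁.center_ne huv) (h₂.center_ne huv) hx⟩
    · exact ⟨x₁, L₁, h₁, hα₁, h⟩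
  set C : Set V := {z | K.Reachable y z}
  have hC : ∀ ⦃a b⦄, K.Adj a b → b ∈ C → a ∈ C := fun a b hab hb => hb.trans hab.symm.reachable
  have huC : u ∉ C := fun h => hyu h.symm
  have hm' := hm.kempeSwap hα₁.1 hβ.1 hC
  have hβ' := hβ.kempeSwap_of_notMem hC huC
  have hswap : ∀ {z}, z ∈ C → IsMissingColor (G.deleteEdges {s(u, v)}) c m z α →
      IsMissingColor (G.deleteEdges {s(u, v)}) c (SimpleGraph.kempeSwap m α β C) z β :=
    fun hz h => by simpa using h.kempeSwap_of_mem (α := α) (β := β) hz (by simpa using hβ.1)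
  rcases hy.kempeSwap_or_exists hC huC hβ with hy' | ⟨z, hz, ⟨L', hz'⟩, hαz⟩
  · exact hy'.exists_isEdgeColoring huv hm' hβ' (hswap (Reachable.refl y) hαy)
  · exact hz'.exists_isEdgeColoring huv hm' hβ' (hswap hz hαz)

open Classical in
noncomputable def missingColors (H : SimpleGraph V) (c : ℕ) (m : Sym2 V → ℕ) (x : V) :
    Finset ℕ :=
  {a ∈ Icc 1 c | ∀ ⦃y⦄, H.Adj x y → m s(x, y) ≠ a}

@[simp]
theorem mem_missingColors {x : V} {a : ℕ} :
    a ∈ missingColors H c m x ↔ IsMissingColor H c m x a := by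
  simp [missingColors, IsMissingColor]

theorem le_card_missingColors_add_card {x : V} {N : Finset V} (hN : ∀ ⦃y⦄, H.Adj x y → y ∈ N) :
    c ≤ #(missingColors H c m x) + #N := by
  classical
  have hsub : Icc 1 c ⊆ missingColors H c m x ∪ N.image fun y => m s(x, y) := by
    intro a ha
    by_cases h : ∃ y, H.Adj x y ∧ m s(x, y) = a
    · obtain ⟨y, hxy, rfl⟩ := h
      exact mem_union_right _ (mem_image_of_mem _ (hN hxy))
    · exact mem_union_left _ (mem_missingColors.2
        ⟨by simpa using ha, fun y hxy hya => h ⟨y, hxy, hya⟩⟩)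
  calc c = #(Icc 1 c) := by simp
    _ ≤ #(missingColors H c m x) + #(N.image fun y => m s(x, y)) :=
      (card_le_card hsub).trans (card_union_le _ _)
    _ ≤ #(missingColors H c m x) + #N := by gcongr; exact card_image_le

section Degree

variable [Fintype V] [DecidableRel G.Adj]

theorem le_card_missingColors_add_degree (hHG : H ≤ G) (x : V) :
    c ≤ #(missingColors H c m x) + G.degree x := by
  rw [← card_neighborFinset_eq_degree]
  exact le_card_missingColors_add_card fun y hxy => (mem_neighborFinset _ _ _).2 (hHG hxy)

theorem lt_card_missingColors_deleteEdges_add_degree [DecidableEq V] (huv : G.Adj u v) :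
    c < #(missingColors (G.deleteEdges {s(u, v)}) c m u) + G.degree u := by
  have hle := le_card_missingColors_add_card (H := G.deleteEdges {s(u, v)}) (c := c) (m := m)
    (N := (G.neighborFinset u).erase v) fun y huy => by
      obtain ⟨huy, hne⟩ := deleteEdges_adj.1 huy
      exact mem_erase.2 ⟨by rintro rfl; exact hne rfl, (mem_neighborFinset _ _ _).2 huy⟩
  rw [card_erase_of_mem ((mem_neighborFinset _ _ _).2 huv), card_neighborFinset_eq_degree] at hle
  have := (G.degree_pos_iff_exists_adj u).2 ⟨v, huv⟩
  omega

end Degree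

section FanSet

variable [Fintype V]

open Classical in
noncomputable def fanSet (H : SimpleGraph V) (c : ℕ) (m : Sym2 V → ℕ) (u v : V) : Finset V :=
  {y | ∃ L, IsFan H c m u v y L}

theorem mem_fanSet {y : V} : y ∈ fanSet H c m u v ↔ ∃ L, IsFan H c m u v y L := by
  simp [fanSet]

theorem start_mem_fanSet : v ∈ fanSet H c m u v :=
  mem_fanSet.2 ⟨[], .base⟩

theorem coe_fanSet_subset_neighborSet (huv : G.Adj u v) :
    (fanSet (G.deleteEdges {s(u, v)}) c m u v : Set V) ⊆ G.neighborSet u := by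
  intro y hy
  obtain ⟨L, hf⟩ := mem_fanSet.1 hy
  exact (hf.eq_or_adj_of_mem List.mem_cons_self).elim (· ▸ huv) fun h => h.1

variable [DecidableEq V]

theorem exists_mem_fanSet_erase_of_isMissingColor (huv : G.Adj u v)
    (hG : ¬∃ m', IsEdgeColoring G c m') (hm : IsEdgeColoring (G.deleteEdges {s(u, v)}) c m)
    {z : V} {α : ℕ} (hz : z ∈ fanSet (G.deleteEdges {s(u, v)}) c m u v)
    (hα : IsMissingColor (G.deleteEdges {s(u, v)}) c m z α) :
    ∃ w ∈ (fanSet (G.deleteEdges {s(u, v)}) c m u v).erase v, m s(u, w) = α := by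
  obtain ⟨L, hf⟩ := mem_fanSet.1 hz
  obtain ⟨w, huw, rfl⟩ : ∃ w, (G.deleteEdges {s(u, v)}).Adj u w ∧ m s(u, w) = α := by
    by_contra! h
    exact hG (hf.exists_isEdgeColoring huv hm ⟨hα.1, h⟩ hα)
  refine ⟨w, mem_erase.2 ⟨?_, mem_fanSet.2 ?_⟩, rfl⟩
  · rintro rfl
    exact (deleteEdges_adj.1 huw).2 rfl
  · by_cases hw : w ∈ z :: L
    exacts [hf.exists_of_mem hw, ⟨_, .step hf huw hw hα⟩]

theorem pairwiseDisjoint_missingColors_fanSet (huv : G.Adj u v)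
    (hG : ¬∃ m', IsEdgeColoring G c m') (hm : IsEdgeColoring (G.deleteEdges {s(u, v)}) c m)
    {β : ℕ} (hβ : IsMissingColor (G.deleteEdges {s(u, v)}) c m u β) :
    (fanSet (G.deleteEdges {s(u, v)}) c m u v : Set V).PairwiseDisjoint
      (missingColors (G.deleteEdges {s(u, v)}) c m) := by
  intro z₁ hz₁ z₂ hz₂ hne
  rw [Function.onFun_apply, Finset.disjoint_left]
  intro α h₁ h₂
  obtain ⟨L₁, hf₁⟩ := mem_fanSet.1 hz₁
  obtain ⟨L₂, hf₂⟩ := mem_fanSet.1 hz₂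
  exact hG (hf₁.exists_isEdgeColoring_of_isFan huv hm hβ hf₂ hne (mem_missingColors.1 h₁)
    (mem_missingColors.1 h₂))

theorem two_le_sum_degree_add_one_sub_fanSet [DecidableRel G.Adj] (huv : G.Adj u v)
    (hG : ¬∃ m', IsEdgeColoring G c m') (hm : IsEdgeColoring (G.deleteEdges {s(u, v)}) c m)
    (hdeg : ∀ z, G.degree z ≤ c) :
    2 ≤ ∑ z ∈ fanSet (G.deleteEdges {s(u, v)}) c m u v, ((G.degree z : ℤ) + 1 - c) := by
  set Z := fanSet (G.deleteEdges {s(u, v)}) c m u v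
  have hvZ : v ∈ Z := start_mem_fanSet
  obtain ⟨β, hβ⟩ : (missingColors (G.deleteEdges {s(u, v)}) c m u).Nonempty := by
    have := lt_card_missingColors_deleteEdges_add_degree (c := c) (m := m) huv
    have := hdeg u
    rw [← card_pos]
    omega
  have hcount : ∑ z ∈ Z, #(missingColors (G.deleteEdges {s(u, v)}) c m z) ≤ #Z - 1 :=
    sum_card_le_card_sub_one hvZ
      (pairwiseDisjoint_missingColors_fanSet huv hG hm (mem_missingColors.1 hβ))
      fun z hz α hα => mem_image.2
        (exists_mem_fanSet_erase_of_isMissingColor huv hG hm hz (mem_missingColors.1 hα))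
  have hlt : ∑ z ∈ Z, c <
      ∑ z ∈ Z, (#(missingColors (G.deleteEdges {s(u, v)}) c m z) + G.degree z) := by
    refine sum_lt_sum (fun z _ => le_card_missingColors_add_degree (deleteEdges_le _) z)
      ⟨v, hvZ, ?_⟩
    rw [Sym2.eq_swap]
    exact lt_card_missingColors_deleteEdges_add_degree huv.symm
  have hZ : 1 ≤ #Z := card_pos.2 ⟨v, hvZ⟩
  rw [sum_add_distrib, sum_const, smul_eq_mul] at hlt
  simp only [sum_add_distrib, sum_sub_distrib, sum_const, nsmul_eq_mul, mul_one, ← Nat.cast_sum]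
  rw [← Nat.cast_mul]
  omega

end FanSet

end SimpleGraph

theorem vizing_fan_equation_general {V : Type*} [Fintype V]
    (G : SimpleGraph V) [DecidableRel G.Adj] (u v : V) (huv : G.Adj u v)
    (c : ℕ) (hc : c = G.maxDegree) (ℓ : Sym2 V → ℕ)
    (hproper : IsProperLabeling (G.deleteEdges {s(u, v)}) c ℓ)
    (hnoweak : weakCount (G.deleteEdges {s(u, v)}) ℓ = 0)
    (hfan : ∀ Z : Finset V, (↑Z : Set V) ⊆ G.neighborSet u → 2 ≤ Z.card → v ∈ Z →
      (∑ z ∈ Z, ((G.degree z : ℤ) + 1 - c)) < 2) :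
    ∃ ℓ' : Sym2 V → ℕ, IsProperLabeling G c ℓ' ∧ weakCount G ℓ' = 0 := by
  classical
  by_contra hG
  replace hG : ¬∃ m, IsEdgeColoring G c m := fun ⟨m, hm⟩ => hG ⟨m, isEdgeColoring_iff.1 hm⟩
  have hℓ : IsEdgeColoring (G.deleteEdges {s(u, v)}) c ℓ := isEdgeColoring_iff.2 ⟨hproper, hnoweak⟩
  have hdeg : ∀ z, G.degree z ≤ c := fun z => hc ▸ G.degree_le_maxDegree z
  set Z := fanSet (G.deleteEdges {s(u, v)}) c ℓ u v
  have hsum : 2 ≤ ∑ z ∈ Z, ((G.degree z : ℤ) + 1 - c) :=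
    two_le_sum_degree_add_one_sub_fanSet huv hG hℓ hdeg
  have hcard : 2 ≤ #Z := by
    have : ∑ z ∈ Z, ((G.degree z : ℤ) + 1 - c) ≤ ∑ z ∈ Z, 1 :=
      sum_le_sum fun z _ => by linarith [(Nat.cast_le (α := ℤ)).2 (hdeg z)]
    rw [sum_const, nsmul_one] at this
    omega
  exact (hfan Z (coe_fanSet_subset_neighborSet huv) hcard start_mem_fanSet).not_ge hsum

/-- Vizing fan equation consequence: if `G - e` (for `e = {u,v}`) is properly
`c`-edge-colorable for `c = Δ(G)` and every set `Z ⊆ N(u)` with `|Z| ≥ 2` and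
`v ∈ Z` satisfies `Σ_{z ∈ Z} (deg z + 1 - c) < 2`, then `G` is properly
`c`-edge-colorable. -/
theorem vizing_fan_equation {V : Type*} [Fintype V] [DecidableEq V]
    (G : SimpleGraph V) [DecidableRel G.Adj] (u v : V) (huv : G.Adj u v)
    (c : ℕ) (hc : c = G.maxDegree) (ℓ : Sym2 V → ℕ)
    (hproper : IsProperLabeling (G.deleteEdges {s(u, v)}) c ℓ)
    (hnoweak : weakCount (G.deleteEdges {s(u, v)}) ℓ = 0)
    (hfan : ∀ Z : Finset V, (↑Z : Set V) ⊆ G.neighborSet u → 2 ≤ Z.card → v ∈ Z →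
      (∑ z ∈ Z, ((G.degree z : ℤ) + 1 - c)) < 2) :
    ∃ ℓ' : Sym2 V → ℕ, IsProperLabeling G c ℓ' ∧ weakCount G ℓ' = 0 :=
  vizing_fan_equation_general G u v huv c hc ℓ hproper hnoweak hfan
end

section
/- Let G be a graph, c ≥ 3 odd, and let every vertex of a set A ⊆ V have degree at most ⌊c/2⌋+1 in G. Then for any c-colored STC-labeling L of G with E(A) ⊆ W_L there exists a c-colored STC-labeling L' agreeing with L on E \ E(A) such that no edge of E(A) is weak under L'. -/
/-!
The edges inside `A` are recolored one at a time. An edge `uv` with both ends in `A` meets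
at most `2 ⌊c/2⌋ = c - 1` other edges, as `c` is odd, so some strong color in `1, …, c` appears on
none of them. Giving `uv` that color creates no monochromatic induced path on three vertices,
since such a path through `uv` would continue along another edge at `u` or at `v`.
-/

open SimpleGraph

/-- A `c`-colored STC-labeling: every edge gets a color in `{0,…,c}` (`0` = weak),
and no two edges of the same strong color form an induced path on three vertices. -/
def IsSTCLabeling {V : Type*} (G : SimpleGraph V) (c : ℕ) (ℓ : Sym2 V → ℕ) : Prop :=
  (∀ e ∈ G.edgeSet, ℓ e ≤ c) ∧
  ∀ u v w : V, u ≠ w → G.Adj u v → G.Adj v w → ¬ G.Adj u w →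
    ℓ s(u, v) = ℓ s(v, w) → ℓ s(u, v) = 0

namespace SimpleGraph

variable {V : Type*} (G : SimpleGraph V)

def adjEdgeColors (ℓ : Sym2 V → ℕ) (u v : V) : Set ℕ :=
  (fun x => ℓ s(u, x)) '' (G.neighborSet u \ {v}) ∪ (fun x => ℓ s(v, x)) '' (G.neighborSet v \ {u})

variable {G}

theorem apply_mem_adjEdgeColors {ℓ : Sym2 V → ℕ} {u v a b d : V} (he : s(a, b) = s(u, v))
    (hbd : G.Adj b d) (hda : d ≠ a) : ℓ s(b, d) ∈ G.adjEdgeColors ℓ u v := by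
  rcases Sym2.eq_iff.mp he with ⟨rfl, rfl⟩ | ⟨rfl, rfl⟩
  · exact Or.inr ⟨d, ⟨hbd, hda⟩, rfl⟩
  · exact Or.inl ⟨d, ⟨hbd, hda⟩, rfl⟩

theorem ncard_adjEdgeColors_add_two_le [Finite V] (ℓ : Sym2 V → ℕ) {u v : V} (huv : G.Adj u v) :
    (G.adjEdgeColors ℓ u v).ncard + 2 ≤
      (G.neighborSet u).ncard + (G.neighborSet v).ncard := by
  have hu := Set.ncard_sdiff_singleton_add_one (s := G.neighborSet u) huv
  have hv := Set.ncard_sdiff_singleton_add_one (s := G.neighborSet v) huv.symm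
  have := (Set.ncard_union_le _ _).trans
    (add_le_add (Set.ncard_image_le (f := fun x => ℓ s(u, x)) (s := G.neighborSet u \ {v}))
      (Set.ncard_image_le (f := fun x => ℓ s(v, x)) (s := G.neighborSet v \ {u})))
  unfold adjEdgeColors
  omega

theorem exists_mem_Icc_notMem_adjEdgeColors [Finite V] (ℓ : Sym2 V → ℕ) {c : ℕ} {u v : V}
    (huv : G.Adj u v)
    (hdeg : (G.neighborSet u).ncard + (G.neighborSet v).ncard ≤ c + 1) :
    ∃ k ∈ Set.Icc 1 c, k ∉ G.adjEdgeColors ℓ u v := by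
  refine Set.exists_mem_notMem_of_ncard_lt_ncard ?_
    (((Set.toFinite _).image _).union ((Set.toFinite _).image _))
  have := ncard_adjEdgeColors_add_two_le ℓ huv
  rw [← Finset.coe_Icc, Set.ncard_coe_finset, Nat.card_Icc]
  omega

theorem IsSTCLabeling.update [DecidableEq V] {c : ℕ} {ℓ : Sym2 V → ℕ} (hℓ : IsSTCLabeling G c ℓ)
    {u v : V} {k : ℕ} (hk : k ≤ c) (hfree : k ∉ G.adjEdgeColors ℓ u v) :
    IsSTCLabeling G c (Function.update ℓ s(u, v) k) := by
  refine ⟨fun e he => ?_, fun a b d had hab hbd hnad heq => ?_⟩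
  · rcases eq_or_ne e s(u, v) with rfl | hne
    · simpa using hk
    · simpa [hne] using hℓ.1 e he
  by_cases h₁ : s(a, b) = s(u, v) <;> by_cases h₂ : s(b, d) = s(u, v)
  · rcases Sym2.eq_iff.mp (h₁.trans h₂.symm) with ⟨h, h'⟩ | ⟨h, -⟩
    exacts [absurd (h.trans h') had, absurd h had]
  · rw [h₁, Function.update_self, Function.update_of_ne h₂] at heq
    exact absurd (heq ▸ apply_mem_adjEdgeColors h₁ hbd had.symm) hfree
  · rw [h₂, Function.update_self, Function.update_of_ne h₁, Sym2.eq_swap] at heq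
    exact absurd (heq ▸ apply_mem_adjEdgeColors (Sym2.eq_swap.trans h₂) hab.symm had) hfree
  · rw [Function.update_of_ne h₁] at heq ⊢
    rw [Function.update_of_ne h₂] at heq
    exact hℓ.2 a b d had hab hbd hnad heq

theorem IsSTCLabeling.exists_update_ne_zero [Finite V] [DecidableEq V] {c : ℕ} {ℓ : Sym2 V → ℕ}
    (hℓ : IsSTCLabeling G c ℓ) {u v : V} (huv : G.Adj u v)
    (hdeg : (G.neighborSet u).ncard + (G.neighborSet v).ncard ≤ c + 1) :
    ∃ k ≠ 0, IsSTCLabeling G c (Function.update ℓ s(u, v) k) := by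
  obtain ⟨k, ⟨hk₁, hkc⟩, hfree⟩ := exists_mem_Icc_notMem_adjEdgeColors ℓ huv hdeg
  exact ⟨k, by omega, hℓ.update hkc hfree⟩

theorem IsSTCLabeling.exists_agree_forall_ne_zero [Finite V] {c : ℕ} {ℓ : Sym2 V → ℕ}
    (hℓ : IsSTCLabeling G c ℓ) (S : Set (Sym2 V))
    (hdeg : ∀ u v, s(u, v) ∈ S → G.Adj u v →
      (G.neighborSet u).ncard + (G.neighborSet v).ncard ≤ c + 1) :
    ∃ ℓ' : Sym2 V → ℕ, IsSTCLabeling G c ℓ' ∧ (∀ e ∉ S, ℓ' e = ℓ e) ∧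
      ∀ e ∈ G.edgeSet, e ∈ S → ℓ' e ≠ 0 := by
  classical
  induction S, S.toFinite using Set.Finite.induction_on with
  | empty => exact ⟨ℓ, hℓ, fun _ _ => rfl, fun _ _ h => h.elim⟩
  | @insert a S haS _ ih =>
    obtain ⟨ℓ₁, hℓ₁, hagree, hne⟩ :=
      ih fun u v h => hdeg u v (Set.mem_insert_of_mem _ h)
    induction a using Sym2.ind with | _ u v =>
    by_cases huv : G.Adj u v
    · obtain ⟨k, hk, hℓ'⟩ := hℓ₁.exists_update_ne_zero huv (hdeg u v (Set.mem_insert _ _) huv)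
      refine ⟨_, hℓ', fun e he => ?_, fun e he heS => ?_⟩
      · rw [Set.mem_insert_iff, not_or] at he
        rw [Function.update_of_ne he.1, hagree e he.2]
      · rcases heS with rfl | heS
        · simpa using hk
        · rw [Function.update_of_ne (ne_of_mem_of_not_mem heS haS)]
          exact hne e he heS
    · refine ⟨ℓ₁, hℓ₁, fun e he => hagree e fun h => he (Set.mem_insert_of_mem _ h),
        fun e he heS => ?_⟩
      rcases heS with rfl | heS
      exacts [absurd he huv, hne e he heS]

end SimpleGraph

theorem odd_c_periphery_good_general {V : Type*} [Fintype V]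
    (G : SimpleGraph V) (c : ℕ) (hodd : Odd c)
    (A : Set V) (hdeg : ∀ a ∈ A, (G.neighborSet a).ncard ≤ c / 2 + 1)
    (ℓ : Sym2 V → ℕ) (hstc : IsSTCLabeling G c ℓ) :
    ∃ ℓ' : Sym2 V → ℕ, IsSTCLabeling G c ℓ' ∧
      (∀ e ∈ G.edgeSet, ¬ (∀ x ∈ e, x ∈ A) → ℓ' e = ℓ e) ∧
      (∀ e ∈ G.edgeSet, (∀ x ∈ e, x ∈ A) → ℓ' e ≠ 0) := by
  obtain ⟨ℓ', hℓ', hagree, hne⟩ := hstc.exists_agree_forall_ne_zero {e | ∀ x ∈ e, x ∈ A}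
    fun u v huvA _ => by
      have hu := hdeg u (huvA u (Sym2.mem_mk_left u v))
      have hv := hdeg v (huvA v (Sym2.mem_mk_right u v))
      have hc := Nat.odd_iff.mp hodd
      omega
  exact ⟨ℓ', hℓ', fun e _ he => hagree e he, hne⟩

/-- For odd `c ≥ 3` and a set `A` of vertices of degree at most `⌊c/2⌋+1`,
any STC-labeling with all edges inside `A` weak can be changed, only inside
`E(A)`, into one with no weak edge inside `A`. -/
theorem odd_c_periphery_good {V : Type*} [Fintype V] [DecidableEq V]
    (G : SimpleGraph V) (c : ℕ) (hc : 3 ≤ c) (hodd : Odd c)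
    (A : Set V) (hdeg : ∀ a ∈ A, (G.neighborSet a).ncard ≤ c / 2 + 1)
    (ℓ : Sym2 V → ℕ) (hstc : IsSTCLabeling G c ℓ)
    (hweak : ∀ e ∈ G.edgeSet, (∀ x ∈ e, x ∈ A) → ℓ e = 0) :
    ∃ ℓ' : Sym2 V → ℕ, IsSTCLabeling G c ℓ' ∧
      (∀ e ∈ G.edgeSet, ¬ (∀ x ∈ e, x ∈ A) → ℓ' e = ℓ e) ∧
      (∀ e ∈ G.edgeSet, (∀ x ∈ e, x ∈ A) → ℓ' e ≠ 0) :=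
  odd_c_periphery_good_general G c hodd A hdeg ℓ hstc
end

section
/- Let G be a graph, c ∈ ℕ, A a set of vertices each having degree at most ⌊c/2⌋+1 in G, L an STC-labeling of G, e a weak edge of L inside A, and P=(v_1,…,v_r) an edge-simple path in G[A] starting with e, with color sequence (0,q_2,…,q_{r-1}) under L. Then there exists an STC-labeling L' agreeing with L outside E(P) such that either the color sequence of P under L' is (q_2,…,q_{r-1},0), or L' has strictly fewer weak edges than L. -/
/-!
Induct along the path. If the weak edge `uv` has a color in `1..c` that no other edge at `u`
or `v` uses, giving it that color keeps the labeling valid and removes a weak edge. Otherwise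
the at most `2 ⌊c/2⌋ ≤ c` edges adjacent to `uv` use all `c` colors, hence each exactly once.
In particular the color `q` of the next path edge `vw` appears nowhere else around `uv`, so
giving `uv` the color `q` and making `vw` weak is again a valid labeling with the same number
of weak edges, and the weak edge now starts the shorter path `P ∘ succ`.
-/

open SimpleGraph

theorem exists_notMem_image_or_injOn_of_ncard_le {α : Type*} {S : Set α} (hS : S.Finite)
    {c : ℕ} (hc : S.ncard ≤ c) (ℓ : α → ℕ) :
    (∃ q ∈ Set.Icc 1 c, ∀ f ∈ S, ℓ f ≠ q) ∨
      (Set.InjOn ℓ S ∧ ∀ f ∈ S, ℓ f ≠ 0) := by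
  by_cases hcover : Set.Icc 1 c ⊆ ℓ '' S
  · right
    have hle : S.ncard ≤ (ℓ '' S).ncard :=
      hc.trans (by simpa using Set.ncard_le_ncard hcover (hS.image ℓ))
    have himage : Set.Icc 1 c = ℓ '' S :=
      Set.eq_of_subset_of_ncard_le hcover (by simpa using (Set.ncard_image_le hS).trans hc)
        (hS.image ℓ)
    refine ⟨Set.injOn_of_ncard_image_eq (le_antisymm (Set.ncard_image_le hS) hle) hS,
      fun f hf h0 => ?_⟩
    have := himage.symm ▸ Set.mem_image_of_mem ℓ hf
    simp [h0] at this
  · left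
    obtain ⟨q, hq, hq'⟩ := Set.not_subset.mp hcover
    exact ⟨q, hq, fun f hf h => hq' ⟨f, hf, h⟩⟩

section

variable {V : Type*}

namespace SimpleGraph

variable (G : SimpleGraph V)

theorem ncard_incidenceSet [DecidableEq V] (v : V) :
    (G.incidenceSet v).ncard = (G.neighborSet v).ncard := by
  simpa only [Nat.card_coe_set_eq] using Nat.card_congr (G.incidenceSetEquivNeighborSet v)

theorem ncard_incidenceSet_union_sdiff_add_two_le [Finite V] [DecidableEq V] {u v : V}
    (huv : G.Adj u v) :
    ((G.incidenceSet u ∪ G.incidenceSet v) \ {s(u, v)}).ncard + 2 ≤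
      (G.neighborSet u).ncard + (G.neighborSet v).ncard := by
  have hu : s(u, v) ∈ G.incidenceSet u := ⟨huv, Sym2.mem_mk_left u v⟩
  have hv : s(u, v) ∈ G.incidenceSet v := ⟨huv, Sym2.mem_mk_right u v⟩
  rw [Set.union_sdiff_distrib, ← ncard_incidenceSet, ← ncard_incidenceSet,
    ← Set.ncard_sdiff_singleton_add_one hu, ← Set.ncard_sdiff_singleton_add_one hv]
  have := Set.ncard_union_le (G.incidenceSet u \ {s(u, v)}) (G.incidenceSet v \ {s(u, v)})
  omega

end SimpleGraph

section Labeling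

variable {G : SimpleGraph V} {c : ℕ} {ℓ : Sym2 V → ℕ}

/-- `hfree` covers both making `e` weak and giving it a color that no adjacent edge uses. -/
theorem IsSTCLabeling.update [DecidableEq V] (hstc : IsSTCLabeling G c ℓ) {e : Sym2 V} {q : ℕ}
    (hqc : q ≤ c)
    (hfree : ∀ x ∈ e, ∀ y, G.Adj x y → s(x, y) ≠ e → ℓ s(x, y) = q → q = 0) :
    IsSTCLabeling G c (Function.update ℓ e q) := by
  refine ⟨fun f hf => ?_, fun a b d had hab hbd hnad heq => ?_⟩
  · rcases eq_or_ne f e with rfl | hfe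
    · simpa using hqc
    · simpa [hfe] using hstc.1 f hf
  have hab_bd : s(a, b) ≠ s(b, d) := by
    simp [hab.ne, had]
  by_cases h1 : s(a, b) = e <;> by_cases h2 : s(b, d) = e
  · exact absurd (h1.trans h2.symm) hab_bd
  · rw [h1, Function.update_self, Function.update_of_ne h2] at heq
    rw [h1, Function.update_self]
    exact hfree b (h1 ▸ Sym2.mem_mk_right a b) d hbd h2 heq.symm
  · rw [Function.update_of_ne h1, h2, Function.update_self] at heq
    rw [Function.update_of_ne h1, heq]
    exact hfree b (h2 ▸ Sym2.mem_mk_left b d) a hab.symm (Sym2.eq_swap ▸ h1)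
      (Sym2.eq_swap ▸ heq)
  · rw [Function.update_of_ne h1, Function.update_of_ne h2] at heq
    rw [Function.update_of_ne h1]
    exact hstc.2 a b d had hab hbd hnad heq

theorem weakCount_update_zero [Finite V] [DecidableEq V] {e : Sym2 V} (he : e ∈ G.edgeSet)
    (hℓ : ℓ e ≠ 0) : weakCount G (Function.update ℓ e 0) = weakCount G ℓ + 1 := by
  have hset : {f ∈ G.edgeSet | Function.update ℓ e 0 f = 0} =
      insert e {f ∈ G.edgeSet | ℓ f = 0} := by
    ext f
    rcases eq_or_ne f e with rfl | hfe <;> simp [Function.update_apply, *]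
  rw [weakCount, hset, Set.ncard_insert_of_notMem (fun h => hℓ h.2)]
  rfl

theorem weakCount_update_add_one [Finite V] [DecidableEq V] {e : Sym2 V} (he : e ∈ G.edgeSet)
    (hℓ : ℓ e = 0) {q : ℕ} (hq : q ≠ 0) :
    weakCount G (Function.update ℓ e q) + 1 = weakCount G ℓ := by
  have hset : {f ∈ G.edgeSet | Function.update ℓ e q f = 0} =
      {f ∈ G.edgeSet | ℓ f = 0} \ {e} := by
    ext f
    rcases eq_or_ne f e with rfl | hfe <;> simp [Function.update_apply, *]
  rw [weakCount, hset,
    Set.ncard_sdiff_singleton_add_one (s := {f ∈ G.edgeSet | ℓ f = 0}) ⟨he, hℓ⟩]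
  rfl

def moveWeak [DecidableEq V] (ℓ : Sym2 V → ℕ) (e f : Sym2 V) : Sym2 V → ℕ :=
  Function.update (Function.update ℓ f 0) e (ℓ f)

theorem moveWeak_apply_left [DecidableEq V] (e f : Sym2 V) : moveWeak ℓ e f e = ℓ f := by
  simp [moveWeak]

theorem moveWeak_apply_right [DecidableEq V] {e f : Sym2 V} (hne : e ≠ f) :
    moveWeak ℓ e f f = 0 := by
  simp [moveWeak, hne.symm]

theorem moveWeak_apply_of_ne [DecidableEq V] {e f g : Sym2 V} (hge : g ≠ e) (hgf : g ≠ f) :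
    moveWeak ℓ e f g = ℓ g := by
  simp [moveWeak, hge, hgf]

theorem exists_weakCount_lt_or_moveWeak [Finite V] [DecidableEq V] (hstc : IsSTCLabeling G c ℓ)
    {u v w : V} (huv : G.Adj u v) (hvw : G.Adj v w) (hne : s(u, v) ≠ s(v, w))
    (hweak : ℓ s(u, v) = 0) (hu : (G.neighborSet u).ncard ≤ c / 2 + 1)
    (hv : (G.neighborSet v).ncard ≤ c / 2 + 1) :
    (∃ ℓ', IsSTCLabeling G c ℓ' ∧ (∀ e, e ≠ s(u, v) → ℓ' e = ℓ e) ∧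
        weakCount G ℓ' < weakCount G ℓ) ∨
      (IsSTCLabeling G c (moveWeak ℓ s(u, v) s(v, w)) ∧
        weakCount G (moveWeak ℓ s(u, v) s(v, w)) = weakCount G ℓ) := by
  have hS : ((G.incidenceSet u ∪ G.incidenceSet v) \ {s(u, v)}).ncard ≤ c := by
    have := G.ncard_incidenceSet_union_sdiff_add_two_le huv
    omega
  set S := (G.incidenceSet u ∪ G.incidenceSet v) \ {s(u, v)}
  have hmemS : ∀ x ∈ s(u, v), ∀ y, G.Adj x y → s(x, y) ≠ s(u, v) → s(x, y) ∈ S := by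
    intro x hx y hxy hne'
    refine ⟨?_, hne'⟩
    rcases Sym2.mem_iff.mp hx with rfl | rfl
    · exact Or.inl ⟨hxy, Sym2.mem_mk_left x y⟩
    · exact Or.inr ⟨hxy, Sym2.mem_mk_left x y⟩
  rcases exists_notMem_image_or_injOn_of_ncard_le S.toFinite hS ℓ with
    ⟨q, ⟨hq1, hqc⟩, hq⟩ | ⟨hinj, hpos⟩
  · refine .inl ⟨Function.update ℓ s(u, v) q, hstc.update hqc ?_,
      fun e he => Function.update_of_ne he _ _, ?_⟩
    · exact fun x hx y hxy hne' hcol => absurd hcol (hq _ (hmemS x hx y hxy hne'))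
    · have := weakCount_update_add_one (G.mem_edgeSet.2 huv) hweak (q := q) (by omega)
      omega
  · have hvwS : s(v, w) ∈ S := hmemS v (Sym2.mem_mk_right u v) w hvw hne.symm
    have hzero := hstc.update (e := s(v, w)) (Nat.zero_le c) (fun _ _ _ _ _ _ => rfl)
    refine .inr ⟨hzero.update (hstc.1 _ hvw) fun x hx y hxy hne' hcol => ?_, ?_⟩
    · by_cases hxy_vw : s(x, y) = s(v, w)
      · simpa [hxy_vw] using hcol.symm
      · rw [Function.update_of_ne hxy_vw] at hcol
        exact absurd (hinj (hmemS x hx y hxy hne') hvwS hcol) hxy_vw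
    · have h₁ := weakCount_update_zero (G.mem_edgeSet.2 hvw) (hpos _ hvwS)
      have h₂ := weakCount_update_add_one (ℓ := Function.update ℓ s(v, w) 0)
        (G.mem_edgeSet.2 huv) (by rwa [Function.update_of_ne hne]) (hpos _ hvwS)
      rw [moveWeak]
      omega

end Labeling

section Path

variable {P : ℕ → V} {r : ℕ}

def pathEdges (P : ℕ → V) (r : ℕ) : Set (Sym2 V) :=
  {e | ∃ i, i + 1 < r ∧ e = s(P i, P (i + 1))}

theorem mem_pathEdges_succ (hr : 1 ≤ r) {e : Sym2 V} :
    e ∈ pathEdges P (r + 1) ↔ e = s(P 0, P 1) ∨ e ∈ pathEdges (fun i => P (i + 1)) r := by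
  constructor
  · rintro ⟨_ | i, hi, rfl⟩
    · exact .inl rfl
    · exact .inr ⟨i, by omega, rfl⟩
  · rintro (rfl | ⟨i, hi, rfl⟩)
    · exact ⟨0, by omega, rfl⟩
    · exact ⟨i + 1, by omega, rfl⟩

def ColorsShiftedAlong (P : ℕ → V) (r : ℕ) (ℓ ℓ' : Sym2 V → ℕ) : Prop :=
  (∀ i, i + 2 < r → ℓ' s(P i, P (i + 1)) = ℓ s(P (i + 1), P (i + 2))) ∧
    ℓ' s(P (r - 2), P (r - 1)) = 0

variable [DecidableEq V] {ℓ ℓ' : Sym2 V → ℕ}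

theorem eq_of_notMem_pathEdges_succ (hr : 2 ≤ r)
    (hagree : ∀ e ∉ pathEdges (fun i => P (i + 1)) r,
      ℓ' e = moveWeak ℓ s(P 0, P 1) s(P 1, P 2) e) :
    ∀ e ∉ pathEdges P (r + 1), ℓ' e = ℓ e := by
  intro e he
  rw [mem_pathEdges_succ (by omega), not_or] at he
  have h12 : e ≠ s(P 1, P 2) := fun h => he.2 ⟨0, by omega, h⟩
  rw [hagree e he.2, moveWeak_apply_of_ne he.1 h12]

theorem ColorsShiftedAlong.of_moveWeak (hr : 2 ≤ r)
    (hsimple : ∀ i j, i + 1 < r + 1 → j + 1 < r + 1 → i ≠ j →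
      s(P i, P (i + 1)) ≠ s(P j, P (j + 1)))
    (hagree : ∀ e ∉ pathEdges (fun i => P (i + 1)) r,
      ℓ' e = moveWeak ℓ s(P 0, P 1) s(P 1, P 2) e)
    (hshift : ColorsShiftedAlong (fun i => P (i + 1)) r
      (moveWeak ℓ s(P 0, P 1) s(P 1, P 2)) ℓ') :
    ColorsShiftedAlong P (r + 1) ℓ ℓ' := by
  obtain ⟨hstep, hlast⟩ := hshift
  refine ⟨fun i hi => ?_, ?_⟩
  · rcases i with _ | i
    · have hfirst : s(P 0, P 1) ∉ pathEdges (fun i => P (i + 1)) r := by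
        rintro ⟨j, hj, hje⟩
        exact hsimple 0 (j + 1) (by omega) (by omega) (by omega) hje
      rw [hagree _ hfirst, moveWeak_apply_left]
    · rw [hstep i (by omega), moveWeak_apply_of_ne (hsimple _ 0 (by omega) (by omega) (by omega))
        (hsimple _ 1 (by omega) (by omega) (by omega))]
  · obtain ⟨m, rfl⟩ : ∃ m, r = m + 2 := ⟨r - 2, by omega⟩
    simpa using hlast

end Path

end

/-- Moving a weak edge along an edge-simple path inside a set of low-degree
vertices: the colors of the path edges can be shifted so that the weak edge
moves to the end of the path, or the total number of weak edges drops. -/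
theorem move_weak_edge_along_path {V : Type*} [Fintype V] [DecidableEq V]
    (G : SimpleGraph V) (c : ℕ)
    (A : Set V) (hdeg : ∀ a ∈ A, (G.neighborSet a).ncard ≤ c / 2 + 1)
    (ℓ : Sym2 V → ℕ) (hstc : IsSTCLabeling G c ℓ)
    (r : ℕ) (hr : 2 ≤ r) (P : ℕ → V)
    (hadj : ∀ i, i + 1 < r → G.Adj (P i) (P (i + 1)))
    (hA : ∀ i, i < r → P i ∈ A)
    (hsimple : ∀ i j, i + 1 < r → j + 1 < r → i ≠ j →
      s(P i, P (i + 1)) ≠ s(P j, P (j + 1)))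
    (hweak : ℓ s(P 0, P 1) = 0)
    (EP : Set (Sym2 V)) (hEP : EP = {e | ∃ i, i + 1 < r ∧ e = s(P i, P (i + 1))}) :
    ∃ ℓ' : Sym2 V → ℕ, IsSTCLabeling G c ℓ' ∧
      (∀ e : Sym2 V, e ∉ EP → ℓ' e = ℓ e) ∧
      (((∀ i, i + 2 < r → ℓ' s(P i, P (i + 1)) = ℓ s(P (i + 1), P (i + 2))) ∧
          ℓ' s(P (r - 2), P (r - 1)) = 0) ∨
        weakCount G ℓ' < weakCount G ℓ) := by
  subst hEP
  induction r, hr using Nat.le_induction generalizing P ℓ with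
  | base => exact ⟨ℓ, hstc, fun _ _ => rfl, .inl ⟨fun i hi => by omega, hweak⟩⟩
  | succ r hr IH =>
    have hne : s(P 0, P 1) ≠ s(P 1, P 2) := hsimple 0 1 (by omega) (by omega) (by omega)
    rcases exists_weakCount_lt_or_moveWeak hstc (hadj 0 (by omega)) (hadj 1 (by omega)) hne hweak
        (hdeg _ (hA 0 (by omega))) (hdeg _ (hA 1 (by omega))) with
      ⟨ℓ', hstc', hagree, hlt⟩ | ⟨hstc₁, hcount⟩
    · exact ⟨ℓ', hstc', fun e he => hagree e fun h => he ⟨0, by omega, h⟩, .inr hlt⟩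
    · obtain ⟨ℓ', hstc', hagree, hres⟩ := IH _ hstc₁ (fun i => P (i + 1))
        (fun i _ => hadj (i + 1) (by omega)) (fun i _ => hA (i + 1) (by omega))
        (fun i j _ _ _ => hsimple (i + 1) (j + 1) (by omega) (by omega) (by omega))
        (moveWeak_apply_right hne)
      exact ⟨ℓ', hstc', eq_of_notMem_pathEdges_succ hr hagree,
        hres.imp (ColorsShiftedAlong.of_moveWeak hr hsimple hagree) (hcount ▸ ·)⟩
end

section
/- Let G be a graph, c ∈ ℕ, A a connected component of the graph induced by vertices of degree at most ⌊c/2⌋+1, and L an STC-labeling of G. Then there exists an STC-labeling L' agreeing with L on all edges outside E(A) such that L' has at most one weak edge inside E(A). -/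
/-!
Every edge with both ends in `A` meets at most `2 ⌊c/2⌋ ≤ c` other edges. Fix such an edge `e₀`
with an end `r`, and rank every edge inside `A` by the sum of the distances of its ends to `r` in
the periphery: each edge inside `A` other than `e₀` then meets `e₀` or an edge of smaller rank.
Make every edge inside `A` weak and give the edges other than `e₀` strong colours greedily, highest
rank first. When an edge is coloured, a lower-ranked neighbour (or `e₀`) is still weak, so at most
`c - 1` strong colours are blocked. An edge whose colour differs from that of every edge meeting it
lies in no monochromatic induced `P₃`, and making edges weak creates none.
-/

open SimpleGraph

open Finset

theorem Finset.exists_mem_Icc_forall_ne_of_exists_eq_zero {ι : Type*} (s : Finset ι) (L : ι → ℕ)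
    {c : ℕ} (hs : #s ≤ c) (h0 : ∃ y ∈ s, L y = 0) : ∃ k ∈ Icc 1 c, ∀ y ∈ s, L y ≠ k := by
  classical
  obtain ⟨y, hy, hy0⟩ := h0
  have h0mem : 0 ∈ s.image L := mem_image.mpr ⟨y, hy, hy0⟩
  have hlt : #((s.image L).erase 0) < #(Icc 1 c) := by
    have := card_image_le (s := s) (f := L)
    have := card_pos.mpr ⟨y, hy⟩
    rw [card_erase_of_mem h0mem, Nat.card_Icc]
    omega
  obtain ⟨k, hk, hknot⟩ := exists_mem_notMem_of_card_lt_card hlt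
  refine ⟨k, hk, fun z hz hzk => hknot ?_⟩
  have : k ≠ 0 := by rw [mem_Icc] at hk; omega
  exact mem_erase.mpr ⟨this, hzk ▸ mem_image_of_mem L hz⟩

namespace SimpleGraph

theorem exists_greedy_relabel {α : Type*} [DecidableEq α]
    (H : SimpleGraph α) [H.LocallyFinite] {c : ℕ} (ρ : α → ℕ) (T : Finset α)
    (hdeg : ∀ x ∈ T, H.degree x ≤ c) (L : α → ℕ) (hL : ∀ x ∈ T, L x = 0)
    (hanchor : ∀ x ∈ T, ∃ y, H.Adj x y ∧ L y = 0 ∧ (y ∈ T → ρ y < ρ x)) :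
    ∃ L' : α → ℕ, (∀ x ∉ T, L' x = L x) ∧
      ∀ x ∈ T, 0 < L' x ∧ L' x ≤ c ∧ ∀ y, H.Adj x y → L' y ≠ L' x := by
  induction T using Finset.strongInduction generalizing L with
  | H T ih =>
  rcases T.eq_empty_or_nonempty with rfl | hne
  · exact ⟨L, fun _ _ => rfl, by simp⟩
  -- Colour an `x` of maximal rank first: the weak neighbours the others rely on stay weak.
  obtain ⟨x, hxT, hxmax⟩ := T.exists_max_image ρ hne
  obtain ⟨k, hk, hkfree⟩ : ∃ k ∈ Icc 1 c, ∀ y ∈ H.neighborFinset x, L y ≠ k := by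
    obtain ⟨y, hxy, hy0, -⟩ := hanchor x hxT
    exact (H.neighborFinset x).exists_mem_Icc_forall_ne_of_exists_eq_zero L
      (by simpa using hdeg x hxT) ⟨y, by simpa using hxy, hy0⟩
  rw [mem_Icc] at hk
  obtain ⟨L', hout, hin⟩ := ih (T.erase x) (T.erase_ssubset hxT)
    (fun z hz => hdeg z (mem_of_mem_erase hz)) (Function.update L x k)
    (fun z hz => by
      rw [Function.update_of_ne (ne_of_mem_erase hz)]; exact hL z (mem_of_mem_erase hz))
    (fun z hz => by
      obtain ⟨y, hzy, hy0, hyρ⟩ := hanchor z (mem_of_mem_erase hz)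
      have hyx : y ≠ x := by
        rintro rfl
        exact absurd (hxmax z (mem_of_mem_erase hz)) (not_le.mpr (hyρ hxT))
      exact ⟨y, hzy, by rwa [Function.update_of_ne hyx], fun hy => hyρ (mem_of_mem_erase hy)⟩)
  have hLx : L' x = k := by rw [hout x (notMem_erase x T), Function.update_self]
  refine ⟨L', fun z hz => ?_, fun z hz => ?_⟩
  · rw [hout z (fun h => hz (mem_of_mem_erase h)),
      Function.update_of_ne (ne_of_mem_of_not_mem hxT hz).symm]
  by_cases hzx : z = x
  · subst hzx
    refine ⟨by omega, by omega, fun y hxy => ?_⟩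
    by_cases hy : y ∈ T.erase z
    · exact ((hin y hy).2.2 z hxy.symm).symm
    · rw [hout y hy, Function.update_of_ne hxy.ne', hLx]
      exact hkfree y (by simpa using hxy)
  · exact hin z (mem_erase.mpr ⟨hzx, hz⟩)

theorem Reachable.exists_adj_dist_lt {W : Type*} {H : SimpleGraph W} {u r : W}
    (hr : H.Reachable u r) (hne : u ≠ r) : ∃ w, H.Adj u w ∧ H.dist w r < H.dist u r := by
  obtain ⟨p, hp⟩ := hr.exists_walk_length_eq_dist
  cases p with
  | nil => exact absurd rfl hne
  | cons hadj q =>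
    have := H.dist_le q
    rw [Walk.length_cons] at hp
    exact ⟨_, hadj, by omega⟩

theorem ConnectedComponent.exists_descent_induce {V : Type*} {G : SimpleGraph V} {P : Set V}
    (K : (G.induce P).ConnectedComponent) {r : V} (hr : r ∈ Subtype.val '' K.supp) :
    ∃ d : V → ℕ, ∀ a ∈ Subtype.val '' K.supp, a ≠ r →
      ∃ w ∈ Subtype.val '' K.supp, G.Adj a w ∧ d w < d a := by
  classical
  obtain ⟨r, hrK, rfl⟩ := hr
  refine ⟨fun v => if h : v ∈ P then (G.induce P).dist ⟨v, h⟩ r else 0, ?_⟩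
  rintro _ ⟨a, haK, rfl⟩ hne
  obtain ⟨w, haw, hlt⟩ :=
    (K.reachable_of_mem_supp haK hrK).exists_adj_dist_lt (fun h => hne (h ▸ rfl))
  exact ⟨w, ⟨w, K.mem_supp_of_adj_mem_supp haK haw, rfl⟩, haw, by simpa [a.2, w.2] using hlt⟩

variable {V : Type*} {G : SimpleGraph V}

theorem lineGraph_degree_le_two_mul [DecidableEq V] [G.LocallyFinite]
    [G.lineGraph.LocallyFinite] {k : ℕ} (e : G.edgeSet)
    (hdeg : ∀ x ∈ (e : Sym2 V), G.degree x ≤ k + 1) : G.lineGraph.degree e ≤ 2 * k := by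
  obtain ⟨e, he⟩ := e
  induction e using Sym2.ind with | _ u v =>
  set I := (G.incidenceFinset u).erase s(u, v) ∪ (G.incidenceFinset v).erase s(u, v)
  have hmaps : ∀ f ∈ G.lineGraph.neighborFinset ⟨s(u, v), he⟩, (f : Sym2 V) ∈ I := by
    intro f hf
    obtain ⟨hne, w, hwe, hwf⟩ := lineGraph_adj_iff_exists.mp ((mem_neighborFinset _ _ _).mp hf)
    have hfe : (f : Sym2 V) ≠ s(u, v) := fun h' => hne (Subtype.ext h'.symm)
    rcases Sym2.mem_iff.mp hwe with rfl | rfl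
    · exact mem_union_left _ (mem_erase.mpr ⟨hfe, (G.mem_incidenceFinset _ _).mpr ⟨f.2, hwf⟩⟩)
    · exact mem_union_right _ (mem_erase.mpr ⟨hfe, (G.mem_incidenceFinset _ _).mpr ⟨f.2, hwf⟩⟩)
  have hu := hdeg u (Sym2.mem_mk_left _ _)
  have hv := hdeg v (Sym2.mem_mk_right _ _)
  have huv : s(u, v) ∈ G.incidenceFinset u :=
    (G.mem_incidenceFinset _ _).mpr ⟨he, Sym2.mem_mk_left _ _⟩
  have hvu : s(u, v) ∈ G.incidenceFinset v :=
    (G.mem_incidenceFinset _ _).mpr ⟨he, Sym2.mem_mk_right _ _⟩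
  calc G.lineGraph.degree ⟨s(u, v), he⟩ ≤ #I := by
        rw [← card_neighborFinset_eq_degree]
        exact card_le_card_of_injOn Subtype.val hmaps Subtype.val_injective.injOn
    _ ≤ #((G.incidenceFinset u).erase s(u, v)) + #((G.incidenceFinset v).erase s(u, v)) :=
        card_union_le _ _
    _ ≤ 2 * k := by
        rw [card_erase_of_mem huv, card_erase_of_mem hvu, card_incidenceFinset_eq_degree,
          card_incidenceFinset_eq_degree]
        omega

def edgeRank (d : V → ℕ) : Sym2 V → ℕ := Sym2.lift ⟨fun a b => d a + d b, fun _ _ => add_comm _ _⟩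

theorem exists_lineGraph_adj_edgeRank_lt_of_le {A : Set V} {r : V} {d : V → ℕ}
    (hdesc : ∀ a ∈ A, a ≠ r → ∃ w ∈ A, G.Adj a w ∧ d w < d a) {e₀ : G.edgeSet}
    (he₀ : ∀ x ∈ (e₀ : Sym2 V), x ∈ A) (hr : r ∈ (e₀ : Sym2 V)) {a b : V} (hab : G.Adj a b)
    (ha : a ∈ A) (hle : d a ≤ d b) (hne : (⟨s(a, b), hab⟩ : G.edgeSet) ≠ e₀) :
    ∃ f : G.edgeSet, (∀ x ∈ (f : Sym2 V), x ∈ A) ∧ G.lineGraph.Adj ⟨s(a, b), hab⟩ f ∧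
      (f ≠ e₀ → edgeRank d f < edgeRank d s(a, b)) := by
  by_cases har : a = r
  · subst har
    exact ⟨e₀, he₀, lineGraph_adj_iff_exists.mpr ⟨hne, a, Sym2.mem_mk_left _ _, hr⟩,
      fun h => absurd rfl h⟩
  obtain ⟨w, hw, haw, hlt⟩ := hdesc a ha har
  have hrank : edgeRank d s(a, w) < edgeRank d s(a, b) := by
    simp only [edgeRank, Sym2.lift_mk]; omega
  refine ⟨⟨s(a, w), haw⟩, ?_, lineGraph_adj_iff_exists.mpr ⟨?_, a, Sym2.mem_mk_left _ _,
    Sym2.mem_mk_left _ _⟩, fun _ => hrank⟩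
  · intro x hx
    rcases Sym2.mem_iff.mp hx with rfl | rfl <;> assumption
  · intro h
    exact hrank.ne (congrArg (edgeRank d ∘ Subtype.val) h).symm

theorem exists_lineGraph_adj_edgeRank_lt {A : Set V} {r : V} {d : V → ℕ}
    (hdesc : ∀ a ∈ A, a ≠ r → ∃ w ∈ A, G.Adj a w ∧ d w < d a) {e₀ : G.edgeSet}
    (he₀ : ∀ x ∈ (e₀ : Sym2 V), x ∈ A) (hr : r ∈ (e₀ : Sym2 V)) (e : G.edgeSet)
    (he : ∀ x ∈ (e : Sym2 V), x ∈ A) (hne : e ≠ e₀) :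
    ∃ f : G.edgeSet, (∀ x ∈ (f : Sym2 V), x ∈ A) ∧ G.lineGraph.Adj e f ∧
      (f ≠ e₀ → edgeRank d f < edgeRank d e) := by
  obtain ⟨e, hE⟩ := e
  induction e using Sym2.ind with | _ a b =>
  have ha := he a (Sym2.mem_mk_left _ _)
  have hb := he b (Sym2.mem_mk_right _ _)
  rcases le_total (d a) (d b) with hle | hle
  · exact exists_lineGraph_adj_edgeRank_lt_of_le hdesc he₀ hr hE ha hle hne
  · have hswap : (⟨s(a, b), hE⟩ : G.edgeSet) = ⟨s(b, a), G.adj_symm hE⟩ :=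
      Subtype.ext Sym2.eq_swap
    obtain ⟨f, hfA, hadj, hlt⟩ :=
      exists_lineGraph_adj_edgeRank_lt_of_le hdesc he₀ hr (G.adj_symm hE) hb hle (hswap ▸ hne)
    exact ⟨f, hfA, hswap ▸ hadj, by rwa [Sym2.eq_swap] at hlt⟩

theorem exists_rooted_ranking [DecidableEq V] {A : Set V}
    (hdesc : ∀ r ∈ A, ∃ d : V → ℕ, ∀ a ∈ A, a ≠ r → ∃ w ∈ A, G.Adj a w ∧ d w < d a)
    (EA : Finset G.edgeSet) (hEA : ∀ e, e ∈ EA ↔ ∀ x ∈ (e : Sym2 V), x ∈ A) :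
    ∃ T ⊆ EA, #(EA \ T) ≤ 1 ∧ ∃ ρ : G.edgeSet → ℕ,
      ∀ e ∈ T, ∃ f ∈ EA, G.lineGraph.Adj e f ∧ (f ∈ T → ρ f < ρ e) := by
  rcases EA.eq_empty_or_nonempty with rfl | ⟨e₀, he₀⟩
  · exact ⟨∅, empty_subset _, by simp, fun _ => 0, by simp⟩
  have he₀A := (hEA e₀).mp he₀
  obtain ⟨d, hd⟩ := hdesc _ (he₀A _ (Sym2.out_fst_mem _))
  refine ⟨EA.erase e₀, erase_subset _ _, by rw [sdiff_erase_self he₀, card_singleton],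
    fun e => edgeRank d e, fun e he => ?_⟩
  obtain ⟨f, hfA, hef, hlt⟩ := exists_lineGraph_adj_edgeRank_lt hd he₀A (Sym2.out_fst_mem _) e
    ((hEA e).mp (mem_of_mem_erase he)) (ne_of_mem_erase he)
  exact ⟨f, (hEA f).mpr hfA, hef, fun hf => hlt (ne_of_mem_erase hf)⟩

theorem ncard_edges_extend_eq_zero_le [DecidableEq V] {A : Set V} {EA T : Finset G.edgeSet}
    (hEA : ∀ e, e ∈ EA ↔ ∀ x ∈ (e : Sym2 V), x ∈ A) (L' : G.edgeSet → ℕ) (ℓ : Sym2 V → ℕ)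
    (hpos : ∀ e ∈ T, 0 < L' e) :
    {e ∈ G.edgeSet | (∀ x ∈ e, x ∈ A) ∧ Function.extend Subtype.val L' ℓ e = 0}.ncard ≤
      #(EA \ T) := by
  calc _ ≤ (Subtype.val '' ((EA \ T : Finset G.edgeSet) : Set G.edgeSet)).ncard := by
        refine Set.ncard_le_ncard (fun e ⟨he, heA, he0⟩ => ⟨⟨e, he⟩, ?_, rfl⟩) (Set.toFinite _)
        refine mem_coe.mpr (mem_sdiff.mpr ⟨(hEA _).mpr heA, fun hT => (hpos _ hT).ne' ?_⟩)
        rwa [← Subtype.val_injective.extend_apply L' ℓ]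
    _ ≤ #(EA \ T) := (Set.ncard_image_le (Set.toFinite _)).trans (Set.ncard_coe_finset _).le

end SimpleGraph

theorem IsSTCLabeling.extend_relabel {V : Type*} {G : SimpleGraph V} {c : ℕ} {ℓ : Sym2 V → ℕ}
    (hℓ : IsSTCLabeling G c ℓ) (T : Set G.edgeSet) (L' : G.edgeSet → ℕ)
    (hout : ∀ e ∉ T, L' e = 0 ∨ L' e = ℓ e)
    (hin : ∀ e ∈ T, L' e ≤ c ∧ ∀ f, G.lineGraph.Adj e f → L' f ≠ L' e) :
    IsSTCLabeling G c (Function.extend Subtype.val L' ℓ) := by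
  have hext : ∀ e : G.edgeSet, Function.extend Subtype.val L' ℓ e = L' e :=
    Subtype.val_injective.extend_apply L' ℓ
  refine ⟨fun e he => ?_, fun u v w huw huv hvw huw' heq => ?_⟩
  · rw [hext ⟨e, he⟩]
    by_cases hT : ⟨e, he⟩ ∈ T
    · exact (hin _ hT).1
    · rcases hout _ hT with h | h <;> rw [h]
      exacts [Nat.zero_le c, hℓ.1 e he]
  set e₁ : G.edgeSet := ⟨s(u, v), huv⟩
  set e₂ : G.edgeSet := ⟨s(v, w), hvw⟩
  have hadj : G.lineGraph.Adj e₁ e₂ := by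
    refine lineGraph_adj_iff_exists.mpr
      ⟨fun h => ?_, v, Sym2.mem_mk_right _ _, Sym2.mem_mk_left _ _⟩
    rcases Sym2.eq_iff.mp (congrArg Subtype.val h) with ⟨h', -⟩ | ⟨h', -⟩
    exacts [huv.ne h', huw h']
  rw [hext e₁, hext e₂] at heq
  rw [hext e₁]
  by_cases h₁ : e₁ ∈ T
  · exact absurd heq.symm ((hin _ h₁).2 _ hadj)
  by_cases h₂ : e₂ ∈ T
  · exact absurd heq ((hin _ h₂).2 _ hadj.symm)
  rcases hout _ h₁ with h₁ | h₁
  · exact h₁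
  rcases hout _ h₂ with h₂ | h₂
  · exact heq.trans h₂
  rw [h₁] at heq ⊢
  rw [h₂] at heq
  exact hℓ.2 u v w huw huv hvw huw' heq

/-- For a periphery component `A` (a connected component of the subgraph induced
by the vertices of degree at most `⌊c/2⌋+1`) and any STC-labeling `L`, there is
an STC-labeling agreeing with `L` outside `E(A)` with at most one weak edge
inside `E(A)`. -/
theorem at_most_one_weak_in_periphery_component {V : Type*} [Fintype V] [DecidableEq V]
    (G : SimpleGraph V) (c : ℕ)
    (Pset : Set V) (hP : Pset = {v : V | (G.neighborSet v).ncard ≤ c / 2 + 1})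
    (K : (G.induce Pset).ConnectedComponent)
    (A : Set V) (hA : A = (fun x : ↥Pset => (x : V)) '' K.supp)
    (ℓ : Sym2 V → ℕ) (hstc : IsSTCLabeling G c ℓ) :
    ∃ ℓ' : Sym2 V → ℕ, IsSTCLabeling G c ℓ' ∧
      (∀ e ∈ G.edgeSet, ¬ (∀ x ∈ e, x ∈ A) → ℓ' e = ℓ e) ∧
      {e ∈ G.edgeSet | (∀ x ∈ e, x ∈ A) ∧ ℓ' e = 0}.ncard ≤ 1 := by
  classical
  set EA := univ.filter fun e : G.edgeSet => ∀ x ∈ (e : Sym2 V), x ∈ A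
  have hEA : ∀ e, e ∈ EA ↔ ∀ x ∈ (e : Sym2 V), x ∈ A := fun e => by simp [EA]
  obtain ⟨T, hTEA, hT1, ρ, hρ⟩ :=
    exists_rooted_ranking (fun r hr => hA ▸ K.exists_descent_induce (hA ▸ hr)) EA hEA
  have hdeg : ∀ e ∈ T, G.lineGraph.degree e ≤ c := by
    refine fun e he => (G.lineGraph_degree_le_two_mul e fun x hx => ?_).trans (Nat.mul_div_le c 2)
    obtain ⟨y, -, rfl⟩ := hA ▸ (hEA e).mp (hTEA he) x hx
    have hy : (G.neighborSet y).ncard ≤ c / 2 + 1 := hP ▸ y.2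
    rwa [Set.ncard_eq_toFinset_card'] at hy
  set L : G.edgeSet → ℕ := fun e => if e ∈ EA then 0 else ℓ e
  obtain ⟨L', hout, hin⟩ := G.lineGraph.exists_greedy_relabel ρ T hdeg L
    (fun e he => if_pos (hTEA he))
    (fun e he => let ⟨f, hf, hef, hlt⟩ := hρ e he; ⟨f, hef, if_pos hf, hlt⟩)
  refine ⟨Function.extend Subtype.val L' ℓ, hstc.extend_relabel T L' (fun e he => ?_)
    (fun e he => (hin e he).2), fun e he hnA => ?_,
    (ncard_edges_extend_eq_zero_le hEA L' ℓ fun e he => (hin e he).1).trans hT1⟩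
  · rw [hout e he]
    by_cases h : e ∈ EA <;> simp [L, h]
  · rw [Subtype.val_injective.extend_apply L' ℓ ⟨e, he⟩,
      hout _ fun h => hnA ((hEA _).mp (hTEA h))]
    exact if_neg fun h => hnA ((hEA _).mp h)
end

section
/- Let G be a graph, c even with c ≥ 4, and A a periphery component (each vertex of A has degree at most c/2+1 in G). If some edge {u,v} ∈ E(A) lies in a triangle of G, then A is good. -/
open SimpleGraph

def IsGoodComponent {V : Type*} (G : SimpleGraph V) (c : ℕ) (A : Set V) : Prop :=
  ∀ ℓ : Sym2 V → ℕ, IsSTCLabeling G c ℓ →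
    (∀ e ∈ G.edgeSet, (∀ x ∈ e, x ∈ A) → ℓ e = 0) →
    ∃ ℓ' : Sym2 V → ℕ, IsSTCLabeling G c ℓ' ∧
      (∀ e ∈ G.edgeSet, ¬ (∀ x ∈ e, x ∈ A) → ℓ' e = ℓ e) ∧
      (∀ e ∈ G.edgeSet, (∀ x ∈ e, x ∈ A) → ℓ' e ≠ 0)

/-! Label the edges inside `A` greedily with labels in `1, …, c`, each edge avoiding the labels
of those edges already labelled with which it forms an induced `P₃`; edges outside `A` count as
labelled from the start. An edge whose endpoints have degree at most `c / 2 + 1` forms an induced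
`P₃` with at most `c` edges, and with at most `c - 2` if it lies in a triangle. Processing the edges
of `A` by decreasing distance from the triangle edge `uv` in the line graph of `A`, every edge
other than `uv` touches an edge labelled after it, which is either a conflict it need not avoid or
closes a triangle with it. Hence fewer than `c` labels are ever forbidden. -/

theorem exists_greedy_labeling {α β : Type*} [Finite α] [LinearOrder β] (R : α → α → Prop)
    (c : ℕ) (D : Set α) (k : α → β) (hk : Set.InjOn k D)
    (hR : ∀ e ∈ D, {f | R e f ∧ (f ∉ D ∨ k f < k e)}.ncard < c) (ℓ : α → ℕ) :
    ∃ ℓ' : α → ℕ, (∀ e ∉ D, ℓ' e = ℓ e) ∧ (∀ e ∈ D, ℓ' e ∈ Set.Icc 1 c) ∧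
      ∀ e ∈ D, ∀ f, R e f → (f ∉ D ∨ k f < k e) → ℓ' e ≠ ℓ' f := by
  classical
  obtain ⟨s, rfl⟩ := D.toFinite.exists_finset_coe
  induction s using Finset.induction_on_min_value k generalizing ℓ with
  | empty => exact ⟨ℓ, fun _ _ => rfl, by simp, by simp⟩
  | insert a s has hmin ih =>
    rw [Finset.coe_insert] at hk hR ⊢
    have hlt : ∀ x ∈ s, k a < k x := fun x hx =>
      (hmin x hx).lt_of_ne fun h => has (hk (.inl rfl) (.inr hx) h ▸ hx)
    obtain ⟨m, hm, hfree⟩ := Set.exists_mem_notMem_of_ncard_lt_ncard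
      (s := ℓ '' {f | R a f ∧ (f ∉ insert a (s : Set α) ∨ k f < k a)}) (t := Set.Icc 1 c)
      (by rw [Set.ncard_Icc_nat]; exact (Set.ncard_image_le).trans_lt (hR a (.inl rfl)))
    have hRs : ∀ e ∈ (s : Set α), {f | R e f ∧ (f ∉ (s : Set α) ∨ k f < k e)}.ncard < c := by
      refine fun e he => lt_of_le_of_lt (Set.ncard_le_ncard ?_) (hR e (.inr he))
      rintro f ⟨hef, hf | hf⟩
      · by_cases hfa : f = a
        · exact ⟨hef, .inr (hfa ▸ hlt e he)⟩
        · exact ⟨hef, .inl fun h => h.elim hfa hf⟩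
      · exact ⟨hef, .inr hf⟩
    obtain ⟨ℓ', hout, hin, hne⟩ := ih (Function.update ℓ a m) (hk.mono (Set.subset_insert _ _)) hRs
    have haℓ' : ℓ' a = m := by simpa using hout a (by simpa using has)
    refine ⟨ℓ', fun e he => ?_, ?_, ?_⟩
    · rw [hout e fun h => he (.inr h), Function.update_of_ne fun h => he (.inl h)]
    · rintro e (rfl | he)
      · exact haℓ' ▸ hm
      · exact hin e he
    · rintro e (he | he) f hef hf
      · subst e
        have hfout : f ∉ insert a (s : Set α) := by
          rcases hf with hf | hf
          · exact hf
          · rintro (rfl | hfs)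
            exacts [lt_irrefl _ hf, (hmin f hfs).not_gt hf]
        rw [haℓ', hout f fun h => hfout (.inr h), Function.update_of_ne fun h => hfout (.inl h)]
        exact fun h => hfree ⟨f, ⟨hef, hf⟩, h.symm⟩
      · exact hne e he f hef (hf.imp_left fun h h' => h (.inr h'))

namespace SimpleGraph

variable {V : Type*} (G : SimpleGraph V)

def IsInducedP3 (e f : Sym2 V) : Prop :=
  ∃ a b d, e = s(a, b) ∧ f = s(b, d) ∧ a ≠ d ∧ G.Adj a b ∧ G.Adj b d ∧ ¬G.Adj a d

variable {G}

theorem IsInducedP3.symm {e f : Sym2 V} (h : G.IsInducedP3 e f) : G.IsInducedP3 f e := by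
  obtain ⟨a, b, d, rfl, rfl, had, hab, hbd, hnad⟩ := h
  exact ⟨d, b, a, Sym2.eq_swap, Sym2.eq_swap, had.symm, hbd.symm, hab.symm, fun h => hnad h.symm⟩

theorem IsInducedP3.ne {e f : Sym2 V} (h : G.IsInducedP3 e f) : e ≠ f := by
  obtain ⟨a, b, d, rfl, rfl, had, hab, -, -⟩ := h
  rw [Ne, Sym2.eq_iff]
  rintro (⟨hab', -⟩ | ⟨had', -⟩)
  exacts [G.ne_of_adj hab hab', had had']

theorem isInducedP3_or_exists_adj_adj {e f : Sym2 V} (he : e ∈ G.edgeSet) (hf : f ∈ G.edgeSet)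
    (hne : e ≠ f) {t : V} (hte : t ∈ e) (htf : t ∈ f) :
    G.IsInducedP3 e f ∨ ∃ w, ∀ x ∈ e, G.Adj x w := by
  obtain ⟨y, rfl⟩ := Sym2.mem_iff_exists.1 hte
  obtain ⟨z, rfl⟩ := Sym2.mem_iff_exists.1 htf
  have hyz : y ≠ z := by rintro rfl; exact hne rfl
  by_cases hadj : G.Adj y z
  · exact .inr ⟨z, by simpa [hadj] using hf⟩
  · exact .inl ⟨y, t, z, Sym2.eq_swap, rfl, hyz, G.adj_symm he, hf, hadj⟩

theorem ncard_setOf_isInducedP3_add_le [Finite V] {x y : V} (hxy : G.Adj x y) {T : Set V}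
    (hT : T ⊆ G.neighborSet x ∩ G.neighborSet y) :
    {f | G.IsInducedP3 s(x, y) f}.ncard + 2 * (T.ncard + 1) ≤
      (G.neighborSet x).ncard + (G.neighborSet y).ncard := by
  have hsub : {f | G.IsInducedP3 s(x, y) f} ⊆
      (fun z => s(x, z)) '' (G.neighborSet x \ insert y T) ∪
        (fun z => s(y, z)) '' (G.neighborSet y \ insert x T) := by
    rintro _ ⟨a, b, d, hxy', rfl, had, -, hbd, hnad⟩
    rcases Sym2.eq_iff.1 hxy' with ⟨rfl, rfl⟩ | ⟨rfl, rfl⟩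
    · refine .inr ⟨d, ⟨hbd, ?_⟩, rfl⟩
      rintro (rfl | hdT)
      exacts [had rfl, hnad (hT hdT).1]
    · refine .inl ⟨d, ⟨hbd, ?_⟩, rfl⟩
      rintro (rfl | hdT)
      exacts [had rfl, hnad (hT hdT).2]
  have hcard (p q : V) (hpq : G.Adj p q) (hT' : T ⊆ G.neighborSet p) (hqT : q ∉ T) :
      (G.neighborSet p \ insert q T).ncard + (T.ncard + 1) = (G.neighborSet p).ncard := by
    rw [← Set.ncard_insert_of_notMem hqT]
    exact Set.ncard_sdiff_add_ncard_of_subset (Set.insert_subset hpq hT')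
  have hx := hcard x y hxy (fun z hz => (hT hz).1) fun hyT => G.irrefl (hT hyT).2
  have hy := hcard y x hxy.symm (fun z hz => (hT hz).2) fun hxT => G.irrefl (hT hxT).1
  have := (Set.ncard_le_ncard hsub).trans (Set.ncard_union_le _ _)
  have := Set.ncard_image_le (f := fun z => s(x, z)) (s := G.neighborSet x \ insert y T)
  have := Set.ncard_image_le (f := fun z => s(y, z)) (s := G.neighborSet y \ insert x T)
  omega

theorem ncard_setOf_isInducedP3_and_lt [Finite V] {c : ℕ} {e : Sym2 V} (he : e ∈ G.edgeSet)
    (hdeg : ∀ x ∈ e, (G.neighborSet x).ncard ≤ c / 2 + 1) (P : Sym2 V → Prop)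
    (h : (∃ w, ∀ x ∈ e, G.Adj x w) ∨ ∃ f ∈ G.edgeSet, e ≠ f ∧ (∃ t ∈ e, t ∈ f) ∧ ¬P f) :
    {f | G.IsInducedP3 e f ∧ P f}.ncard < c := by
  induction e using Sym2.ind with | _ x y => ?_
  have hxy : G.Adj x y := he
  have hx := hdeg x (Sym2.mem_mk_left x y)
  have hy := hdeg y (Sym2.mem_mk_right x y)
  have hle : {f | G.IsInducedP3 s(x, y) f ∧ P f}.ncard ≤ {f | G.IsInducedP3 s(x, y) f}.ncard :=
    Set.ncard_le_ncard fun f hf => hf.1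
  obtain ⟨w, hw⟩ | ⟨f, hconf, hPf⟩ :
      (∃ w, ∀ z ∈ s(x, y), G.Adj z w) ∨ ∃ f, G.IsInducedP3 s(x, y) f ∧ ¬P f := by
    rcases h with h | ⟨f, hf, hne, ⟨t, hte, htf⟩, hPf⟩
    · exact .inl h
    · exact (isInducedP3_or_exists_adj_adj he hf hne hte htf).symm.imp_right
        fun hconf => ⟨f, hconf, hPf⟩
  · have := ncard_setOf_isInducedP3_add_le hxy (T := {w})
      (Set.singleton_subset_iff.2 ⟨hw x (Sym2.mem_mk_left x y), hw y (Sym2.mem_mk_right x y)⟩)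
    rw [Set.ncard_singleton] at this
    omega
  · have hsub : {f | G.IsInducedP3 s(x, y) f ∧ P f} ⊆ {f | G.IsInducedP3 s(x, y) f} \ {f} :=
      fun g hg => ⟨hg.1, fun hgf => hPf (hgf ▸ hg.2)⟩
    have h1 := Set.ncard_le_ncard hsub
    have h2 := ncard_setOf_isInducedP3_add_le hxy (T := ∅) (Set.empty_subset _)
    have h3 : 0 < {f | G.IsInducedP3 s(x, y) f}.ncard := (Set.ncard_pos).2 ⟨f, hconf⟩
    rw [Set.ncard_sdiff_singleton_of_mem (s := {g | G.IsInducedP3 s(x, y) g}) hconf] at h1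
    rw [Set.ncard_empty] at h2
    omega

variable (G) in
def edgesWithin (A : Set V) : Set (Sym2 V) := {e | e ∈ G.edgeSet ∧ ∀ x ∈ e, x ∈ A}

def lineGraphOn (D : Set (Sym2 V)) : SimpleGraph (Sym2 V) where
  Adj e f := e ≠ f ∧ e ∈ D ∧ f ∈ D ∧ ∃ t ∈ e, t ∈ f
  symm := ⟨fun _ _ ⟨hne, he, hf, t, hte, htf⟩ => ⟨hne.symm, hf, he, t, htf, hte⟩⟩
  loopless := ⟨fun _ h => h.1 rfl⟩

theorem lineGraphOn_reachable {D : Set (Sym2 V)} {e f : Sym2 V} (he : e ∈ D) (hf : f ∈ D)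
    {t : V} (hte : t ∈ e) (htf : t ∈ f) : (lineGraphOn D).Reachable e f := by
  by_cases hef : e = f
  · exact hef ▸ .refl e
  · exact Adj.reachable ⟨hef, he, hf, t, hte, htf⟩

theorem Walk.reachable_lineGraphOn_edgesWithin {A : Set V} {a b : V} (p : G.Walk a b)
    (hp : ∀ z ∈ p.support, z ∈ A) {e f : Sym2 V} (he : e ∈ G.edgesWithin A) (hae : a ∈ e)
    (hf : f ∈ G.edgesWithin A) (hbf : b ∈ f) : (lineGraphOn (G.edgesWithin A)).Reachable e f := by
  induction p generalizing e with
  | nil => exact lineGraphOn_reachable he hf hae hbf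
  | @cons a z b hadj q ih =>
    have hq : ∀ x ∈ q.support, x ∈ A := fun x hx => hp x (List.mem_cons_of_mem a hx)
    have haz : s(a, z) ∈ G.edgesWithin A := by
      refine ⟨hadj, fun x hx => ?_⟩
      rcases Sym2.mem_iff.1 hx with rfl | rfl
      exacts [hp x List.mem_cons_self, hq x q.start_mem_support]
    exact (lineGraphOn_reachable he haz hae (Sym2.mem_mk_left a z)).trans
      (ih hq haz (Sym2.mem_mk_right a z) hbf)

theorem ConnectedComponent.exists_walk_support_subset {S : Set V}
    (K : (G.induce S).ConnectedComponent) {x y : S} (hx : x ∈ K.supp) (hy : y ∈ K.supp) :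
    ∃ p : G.Walk x y, ∀ z ∈ p.support, z ∈ (↑) '' K.supp := by
  classical
  obtain ⟨q⟩ := K.reachable_of_mem_supp hx hy
  refine ⟨q.map (Embedding.induce S).toHom, fun _ hmem => ?_⟩
  obtain ⟨z, hz, rfl⟩ := List.mem_map.1 (Walk.support_map _ q ▸ hmem)
  exact ⟨z, (ConnectedComponent.sound (q.takeUntil z hz).reachable).symm.trans hx, rfl⟩

theorem ConnectedComponent.reachable_lineGraphOn_edgesWithin {S : Set V}
    (K : (G.induce S).ConnectedComponent) {e f : Sym2 V}
    (he : e ∈ G.edgesWithin ((↑) '' K.supp)) (hf : f ∈ G.edgesWithin ((↑) '' K.supp)) :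
    (lineGraphOn (G.edgesWithin ((↑) '' K.supp))).Reachable e f := by
  obtain ⟨x, hx, hxe⟩ := he.2 _ e.out_fst_mem
  obtain ⟨y, hy, hyf⟩ := hf.2 _ f.out_fst_mem
  obtain ⟨p, hp⟩ := K.exists_walk_support_subset hx hy
  exact p.reachable_lineGraphOn_edgesWithin hp he (hxe ▸ e.out_fst_mem) hf (hyf ▸ f.out_fst_mem)

theorem Reachable.exists_adj_dist_lt_s13 {u v : V} (h : G.Reachable u v) (hne : u ≠ v) :
    ∃ w, G.Adj u w ∧ G.dist w v < G.dist u v := by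
  obtain ⟨p, hp⟩ := h.exists_walk_length_eq_dist
  cases p with
  | nil => exact absurd rfl hne
  | cons hadj q =>
    rw [Walk.length_cons] at hp
    exact ⟨_, hadj, (dist_le q).trans_lt (by omega)⟩

theorem exists_injective_lt_of_reachable {α : Type*} [Countable α] (H : SimpleGraph α) (r : α) :
    ∃ k : α → ℕᵒᵈ ×ₗ ℕ, Function.Injective k ∧
      ∀ e, H.Reachable e r → e ≠ r → ∃ f, H.Adj e f ∧ k e < k f := by
  obtain ⟨idx, hidx⟩ := Countable.exists_injective_nat α
  refine ⟨fun e => toLex (OrderDual.toDual (H.dist e r), idx e), fun e f h => ?_,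
    fun e he hne => ?_⟩
  · exact hidx (congrArg Prod.snd (toLex.injective h))
  · obtain ⟨f, hadj, hlt⟩ := he.exists_adj_dist_lt_s13 hne
    exact ⟨f, hadj, Prod.Lex.toLex_lt_toLex.2 (.inl hlt)⟩

end SimpleGraph

theorem IsSTCLabeling.exists_relabel_ne_zero {V β : Type*} [Finite V] [LinearOrder β]
    {G : SimpleGraph V} {c : ℕ} {ℓ : Sym2 V → ℕ} (hℓ : IsSTCLabeling G c ℓ) (D : Set (Sym2 V))
    (k : Sym2 V → β) (hk : Set.InjOn k D)
    (hD : ∀ e ∈ D, {f | G.IsInducedP3 e f ∧ (f ∉ D ∨ k f < k e)}.ncard < c) :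
    ∃ ℓ' : Sym2 V → ℕ, IsSTCLabeling G c ℓ' ∧ (∀ e ∉ D, ℓ' e = ℓ e) ∧ ∀ e ∈ D, ℓ' e ≠ 0 := by
  obtain ⟨ℓ', hout, hin, hne⟩ := exists_greedy_labeling G.IsInducedP3 c D k hk hD ℓ
  refine ⟨ℓ', ⟨fun e he => ?_, fun a b d had hab hbd hnad heq => ?_⟩, hout,
    fun e he => Nat.pos_iff_ne_zero.1 (hin e he).1⟩
  · by_cases heD : e ∈ D
    · exact (hin e heD).2
    · exact hout e heD ▸ hℓ.1 e he
  have hP3 : G.IsInducedP3 s(a, b) s(b, d) := ⟨a, b, d, rfl, rfl, had, hab, hbd, hnad⟩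
  by_cases he : s(a, b) ∈ D <;> by_cases hf : s(b, d) ∈ D
  · exfalso
    rcases lt_trichotomy (k s(a, b)) (k s(b, d)) with h | h | h
    · exact hne _ hf _ hP3.symm (.inr h) heq.symm
    · exact hP3.ne (hk he hf h)
    · exact hne _ he _ hP3 (.inr h) heq
  · exact absurd heq (hne _ he _ hP3 (.inl hf))
  · exact absurd heq.symm (hne _ hf _ hP3.symm (.inl he))
  · rw [hout _ he, hout _ hf] at heq
    rw [hout _ he]
    exact hℓ.2 a b d had hab hbd hnad heq

theorem triangle_edge_implies_good_general {V : Type*} [Fintype V]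
    (G : SimpleGraph V) (c : ℕ)
    (Pset : Set V) (hP : Pset = {v : V | (G.neighborSet v).ncard ≤ c / 2 + 1})
    (K : (G.induce Pset).ConnectedComponent)
    (A : Set V) (hA : A = (fun x : ↥Pset => (x : V)) '' K.supp)
    (u v : V) (huv : G.Adj u v) (hu : u ∈ A) (hv : v ∈ A)
    (htri : ∃ w : V, G.Adj u w ∧ G.Adj v w) :
    IsGoodComponent G c A := by
  rintro ℓ hℓ -
  obtain ⟨w, huw, hvw⟩ := htri
  have hdeg : ∀ x ∈ A, (G.neighborSet x).ncard ≤ c / 2 + 1 := by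
    rw [hA]
    rintro _ ⟨x, -, rfl⟩
    simpa [hP] using x.2
  have he₀ : s(u, v) ∈ G.edgesWithin A := ⟨huv, by simp [hu, hv]⟩
  subst hA
  set D := G.edgesWithin ((↑) '' K.supp)
  obtain ⟨k, hk, hk_lt⟩ := exists_injective_lt_of_reachable (lineGraphOn D) s(u, v)
  have hcount : ∀ e ∈ D, {f | G.IsInducedP3 e f ∧ (f ∉ D ∨ k f < k e)}.ncard < c := by
    intro e he
    refine ncard_setOf_isInducedP3_and_lt he.1 (fun x hx => hdeg x (he.2 x hx)) _ ?_
    by_cases he₀' : e = s(u, v)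
    · exact .inl ⟨w, by simp [he₀', huw, hvw]⟩
    · obtain ⟨f, ⟨hne, -, hf, hshare⟩, hlt⟩ :=
        hk_lt e (K.reachable_lineGraphOn_edgesWithin he he₀) he₀'
      exact .inr ⟨f, hf.1, hne, hshare, by simp [hf, hlt.le]⟩
  obtain ⟨ℓ', hℓ', hout, hin⟩ := hℓ.exists_relabel_ne_zero D k hk.injOn hcount
  exact ⟨ℓ', hℓ', fun e _ heA => hout e fun h => heA h.2, fun e he heA => hin e ⟨he, heA⟩⟩

/-- For even `c ≥ 4`, a periphery component containing an edge of a triangle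
of `G` is good. -/
theorem triangle_edge_implies_good {V : Type*} [Fintype V] [DecidableEq V]
    (G : SimpleGraph V) (c : ℕ) (hc : 4 ≤ c) (heven : Even c)
    (Pset : Set V) (hP : Pset = {v : V | (G.neighborSet v).ncard ≤ c / 2 + 1})
    (K : (G.induce Pset).ConnectedComponent)
    (A : Set V) (hA : A = (fun x : ↥Pset => (x : V)) '' K.supp)
    (u v : V) (huv : G.Adj u v) (hu : u ∈ A) (hv : v ∈ A)
    (htri : ∃ w : V, G.Adj u w ∧ G.Adj v w) :
    IsGoodComponent G c A :=
  triangle_edge_implies_good_general G c Pset hP K A hA u v huv hu hv htri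
end
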